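/- arXiv:1403.1845 — 9 statements merged into one kernel-verified Lean document; each statement's English description precedes it below -/
import Mathlib

section
/- Let a and b be coprime positive integers, and let m_0, m_1, …, m_a be nonnegative integers such that Σ_{i=0}^{a} i·m_i = a and Σ_{i=0}^{a} m_i = b. Then the number of (a,b)-Dyck paths having exactly m_i vertical runs of length i for every i ∈ {0,1,…,a} equals (b−1)!/(m_0!·m_1!·…·m_a!). -/
/-- A word over `{N, E}`, encoded as a `List Bool` with `true` = N (north step) and
`false` = E (east step), is an `(a,b)`-Dyck path if it has exactly `a` norths and
`b` easts and every prefix with `i` norths and `j` easts satisfies `b*i ≥ a*j`. -/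
def IsDyckWord (a b : ℕ) (w : List Bool) : Prop :=
  w.count true = a ∧ w.count false = b ∧
    ∀ p : List Bool, p <+: w → a * p.count false ≤ b * p.count true

/-- `runLengthsAux k w` collects the lengths of the vertical runs of `w`,
where `k` is the number of norths seen since the last east (or the start). -/
def runLengthsAux : ℕ → List Bool → List ℕ
  | _, [] => []
  | k, true :: rest => runLengthsAux (k + 1) rest
  | k, false :: rest => k :: runLengthsAux 0 rest

/-- The list of lengths of the vertical runs of a word: each east step terminates a
vertical run whose length is the number of norths since the preceding east
(or since the beginning of the word). -/
def runLengths (w : List Bool) : List ℕ := runLengthsAux 0 w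

/-!
Cutting a word after each east step identifies the Dyck words with the prescribed runs with the
arrangements `ℓ₁, …, ℓ_b` of the multiset `{0^{m₀}, 1^{m₁}, …, a^{m_a}}` satisfying
`a·j ≤ b·(ℓ₁ + ⋯ + ℓ_j)` for all `j`. By the cycle lemma exactly one of the `b` rotations of any
arrangement has this property: the one starting after the point `k` where the excess
`b·(ℓ₁ + ⋯ + ℓ_k) − a·k` of the periodically continued sequence is minimal, and since
`gcd(a, b) = 1` the excesses of `0, …, b - 1` are distinct. So the `b! / ∏ mᵢ!` arrangements fall
into `b`-element rotation classes, each containing exactly one Dyck path.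
-/

def ofRunLengths (L : List ℕ) : List Bool := L.flatMap fun k => List.replicate k true ++ [false]

@[simp] lemma ofRunLengths_nil : ofRunLengths [] = [] := rfl

@[simp] lemma ofRunLengths_cons (k : ℕ) (L : List ℕ) :
    ofRunLengths (k :: L) = List.replicate k true ++ false :: ofRunLengths L := by
  simp [ofRunLengths]

lemma ofRunLengths_append (L M : List ℕ) :
    ofRunLengths (L ++ M) = ofRunLengths L ++ ofRunLengths M := by
  simp [ofRunLengths]

@[simp] lemma count_true_ofRunLengths (L : List ℕ) : (ofRunLengths L).count true = L.sum := by
  induction L with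
  | nil => rfl
  | cons k L ih => simp [ih]

@[simp] lemma count_false_ofRunLengths (L : List ℕ) :
    (ofRunLengths L).count false = L.length := by
  induction L with
  | nil => rfl
  | cons k L ih => simp [ih, List.count_replicate]

lemma runLengthsAux_replicate_append (k n : ℕ) (w : List Bool) :
    runLengthsAux k (List.replicate n true ++ w) = runLengthsAux (k + n) w := by
  induction n generalizing k with
  | zero => rfl
  | succ n ih =>
    rw [List.replicate_succ, List.cons_append, runLengthsAux, ih, add_right_comm, add_assoc]

@[simp] lemma runLengths_ofRunLengths (L : List ℕ) : runLengths (ofRunLengths L) = L := by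
  induction L with
  | nil => rfl
  | cons k L ih =>
    simp only [runLengths, ofRunLengths_cons, runLengthsAux_replicate_append, zero_add,
      runLengthsAux] at ih ⊢
    rw [ih]

lemma ofRunLengths_injective : Function.Injective ofRunLengths :=
  Function.LeftInverse.injective runLengths_ofRunLengths

lemma length_runLengthsAux (k : ℕ) (w : List Bool) :
    (runLengthsAux k w).length = w.count false := by
  induction w generalizing k with
  | nil => rfl
  | cons c w ih => cases c <;> simp [runLengthsAux, ih]

lemma length_runLengths (w : List Bool) : (runLengths w).length = w.count false :=
  length_runLengthsAux 0 w

lemma exists_replicate_append_eq_ofRunLengths_append (k : ℕ) (w : List Bool) :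
    ∃ t, List.replicate k true ++ w =
      ofRunLengths (runLengthsAux k w) ++ List.replicate t true := by
  induction w generalizing k with
  | nil => exact ⟨k, by simp [runLengthsAux]⟩
  | cons c w ih =>
    cases c with
    | false =>
      obtain ⟨t, ht⟩ := ih 0
      exact ⟨t, by simpa [runLengthsAux] using ht⟩
    | true =>
      obtain ⟨t, ht⟩ := ih (k + 1)
      exact ⟨t, by rw [runLengthsAux, ← ht, List.replicate_succ']; simp⟩

lemma ofRunLengths_runLengths {w : List Bool} (h : (runLengths w).sum = w.count true) :
    ofRunLengths (runLengths w) = w := by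
  obtain ⟨t, ht⟩ := exists_replicate_append_eq_ofRunLengths_append 0 w
  have htrue := congrArg (List.count true) ht
  simp only [List.replicate_zero, List.nil_append, List.count_append, count_true_ofRunLengths,
    List.count_replicate_self] at htrue
  have : t = 0 := by rw [runLengths] at h; omega
  simpa [this, runLengths] using ht.symm

lemma sum_take_count_false_le_count_true {L : List ℕ} {p : List Bool}
    (hp : p <+: ofRunLengths L) : (L.take (p.count false)).sum ≤ p.count true := by
  induction L generalizing p with
  | nil => simp [List.prefix_nil.mp hp]
  | cons k L ih =>
    rw [List.prefix_iff_eq_take, ofRunLengths_cons, List.take_append] at hp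
    rcases le_or_gt p.length k with hk | hk
    · rw [List.length_replicate, Nat.sub_eq_zero_of_le hk, List.take_zero, List.append_nil,
        List.take_replicate] at hp
      rw [hp]
      simp [List.count_replicate]
    · obtain ⟨n, hn⟩ : ∃ n, p.length - k = n + 1 := ⟨p.length - k - 1, by omega⟩
      rw [List.length_replicate, hn, List.take_succ_cons, List.take_of_length_le
        (by simp; omega)] at hp
      have := ih (p := (ofRunLengths L).take n) (List.take_prefix _ _)
      rw [hp]
      simpa [List.count_replicate] using this

/-- The Dyck condition for `ofRunLengths L`, checked only at the prefixes ending with an east step: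
north steps only raise the path. -/
def IsDyckRuns (a b : ℕ) (L : List ℕ) : Prop :=
  ∀ j ≤ L.length, a * j ≤ b * (L.take j).sum

instance (a b : ℕ) : DecidablePred (IsDyckRuns a b) := fun L => by
  unfold IsDyckRuns
  infer_instance

lemma isDyckWord_ofRunLengths_iff {a b : ℕ} {L : List ℕ} :
    IsDyckWord a b (ofRunLengths L) ↔ L.sum = a ∧ L.length = b ∧ IsDyckRuns a b L := by
  simp only [IsDyckWord, count_true_ofRunLengths, count_false_ofRunLengths]
  refine and_congr_right fun _ => and_congr_right fun _ => ⟨fun h j hj => ?_, fun h p hp => ?_⟩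
  · have hpre : ofRunLengths (L.take j) <+: ofRunLengths L :=
      ⟨ofRunLengths (L.drop j), by rw [← ofRunLengths_append, List.take_append_drop]⟩
    simpa [Nat.min_eq_left hj] using h _ hpre
  · have hj : p.count false ≤ L.length := by simpa using hp.count_le false
    calc a * p.count false ≤ b * (L.take (p.count false)).sum := h _ hj
      _ ≤ b * p.count true := Nat.mul_le_mul_left _ (sum_take_count_false_le_count_true hp)

theorem List.sum_take_eq_sum_range_getD {M : Type*} [AddCommMonoid M] (l : List M) (j : ℕ) :
    (l.take j).sum = ∑ i ∈ Finset.range j, l.getD i 0 := by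
  induction l generalizing j with
  | nil => simp
  | cons x l ih =>
    cases j with
    | zero => simp
    | succ j => rw [List.take_succ_cons, List.sum_cons, ih, Finset.sum_range_succ', add_comm]; simp

section CycleLemma

variable (L : List ℕ)

def cyclicPartialSum (k : ℕ) : ℕ := ∑ i ∈ Finset.range k, L.getD (i % L.length) 0

lemma cyclicPartialSum_of_le {k : ℕ} (hk : k ≤ L.length) :
    cyclicPartialSum L k = (L.take k).sum := by
  rw [List.sum_take_eq_sum_range_getD]
  refine Finset.sum_congr rfl fun i hi => ?_
  rw [Nat.mod_eq_of_lt (by simp at hi; omega)]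

lemma cyclicPartialSum_add_length (k : ℕ) :
    cyclicPartialSum L (k + L.length) = cyclicPartialSum L k + L.sum := by
  rw [cyclicPartialSum, add_comm, Finset.sum_range_add, add_comm]
  congr 1
  · exact Finset.sum_congr rfl fun i _ => by rw [Nat.add_mod_left]
  · rw [← cyclicPartialSum, cyclicPartialSum_of_le L le_rfl, List.take_length]

lemma sum_take_rotate_add_cyclicPartialSum (d : ℕ) {j : ℕ} (hj : j ≤ L.length) :
    ((L.rotate d).take j).sum + cyclicPartialSum L d = cyclicPartialSum L (d + j) := by
  rw [List.sum_take_eq_sum_range_getD, cyclicPartialSum, cyclicPartialSum, Finset.sum_range_add,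
    add_comm]
  congr 1
  refine Finset.sum_congr rfl fun i hi => ?_
  have hi : i < L.length := by simp at hi; omega
  rw [List.getD_eq_getElem _ _ (by simpa using hi), List.getD_eq_getElem _ _
    (Nat.mod_lt _ (by omega)), List.getElem_rotate, add_comm i]

def excess (k : ℕ) : ℤ := L.length * cyclicPartialSum L k - L.sum * k

lemma excess_periodic : Function.Periodic (excess L) L.length := fun k => by
  simp only [excess, cyclicPartialSum_add_length]
  push_cast
  ring

lemma isDyckRuns_rotate_iff {d : ℕ} (hd : d < L.length) :
    IsDyckRuns L.sum L.length (L.rotate d) ↔ ∀ k, excess L d ≤ excess L k := by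
  have key : ∀ j ≤ L.length, L.sum * j ≤ L.length * ((L.rotate d).take j).sum ↔
      excess L d ≤ excess L (d + j) := fun j hj => by
    rw [excess, excess, ← sum_take_rotate_add_cyclicPartialSum L d hj,
      ← Nat.cast_le (α := ℤ)]
    push_cast
    constructor <;> intro h <;> linarith
  simp only [IsDyckRuns, List.length_rotate]
  refine ⟨fun h k => ?_, fun h j hj => (key j hj).2 (h _)⟩
  have hr : k % L.length < L.length := Nat.mod_lt _ (by omega)
  rw [← (excess_periodic L).map_mod_nat k]
  rcases le_or_gt d (k % L.length) with hdr | hdr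
  · simpa [Nat.add_sub_cancel' hdr] using (key _ (by omega)).1 (h (k % L.length - d) (by omega))
  · have := (key _ (by omega)).1 (h (k % L.length + L.length - d) (by omega))
    rwa [show d + (k % L.length + L.length - d) = k % L.length + L.length by omega,
      excess_periodic] at this

/-- The excess of `k` is `-a·k` modulo `b`. -/
lemma excess_injOn (hcop : L.sum.Coprime L.length) : Set.InjOn (excess L) (Set.Iio L.length) := by
  intro d hd d' hd' h
  have hnat : L.length * cyclicPartialSum L d + L.sum * d'
      = L.length * cyclicPartialSum L d' + L.sum * d := by
    unfold excess at h
    have : ((L.length * cyclicPartialSum L d + L.sum * d' : ℕ) : ℤ)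
        = (L.length * cyclicPartialSum L d' + L.sum * d : ℕ) := by
      simp only [Nat.cast_add, Nat.cast_mul]
      linarith
    exact_mod_cast this
  have hmod : L.sum * d ≡ L.sum * d' [MOD L.length] := by
    have := congrArg (· % L.length) hnat
    simpa [Nat.ModEq, Nat.mul_add_mod] using this.symm
  have := Nat.ModEq.cancel_left_of_coprime (Nat.coprime_comm.mp hcop) hmod
  rwa [Nat.ModEq, Nat.mod_eq_of_lt hd, Nat.mod_eq_of_lt hd'] at this

/-- The cycle lemma: the Dyck rotation starts at the unique minimum of the excess. -/
theorem existsUnique_isDyckRuns_rotate (hcop : L.sum.Coprime L.length) :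
    ∃! d, d < L.length ∧ IsDyckRuns L.sum L.length (L.rotate d) := by
  have hpos : 0 < L.length := by
    rcases L with _ | _
    · simp at hcop
    · simp
  obtain ⟨d, hd, hmin⟩ := Finset.exists_min_image (Finset.range L.length) (excess L)
    ⟨0, Finset.mem_range.mpr hpos⟩
  rw [Finset.mem_range] at hd
  have hmin' : ∀ k, excess L d ≤ excess L k := fun k => by
    rw [← (excess_periodic L).map_mod_nat k]
    exact hmin _ (Finset.mem_range.mpr (Nat.mod_lt _ hpos))
  refine ⟨d, ⟨hd, (isDyckRuns_rotate_iff L hd).2 hmin'⟩, fun d' ⟨hd', hdyck⟩ => ?_⟩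
  exact excess_injOn L hcop hd' hd
    (le_antisymm ((isDyckRuns_rotate_iff L hd').1 hdyck d) (hmin' d'))

end CycleLemma

theorem card_eq_card_filter_mul_of_existsUnique_rotate {α : Type*} {S : Finset (List α)}
    {P : List α → Prop} [DecidablePred P] {n : ℕ} (hlen : ∀ L ∈ S, L.length = n)
    (hrot : ∀ L ∈ S, ∀ k, L.rotate k ∈ S)
    (huniq : ∀ L ∈ S, ∃! d, d < n ∧ P (L.rotate d)) :
    S.card = (S.filter P).card * n := by
  have hback : ∀ M ∈ S, ∀ e ≤ n, (M.rotate (n - e)).rotate e = M := fun M hM e he => by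
    rw [List.rotate_rotate, Nat.sub_add_cancel he, ← hlen M hM, List.rotate_length]
  rw [← Finset.card_range n, ← Finset.card_product]
  symm
  refine Finset.card_bij (fun x _ => x.1.rotate (n - x.2)) ?_ ?_ ?_
  · rintro ⟨M, e⟩ h
    simp only [Finset.mem_product, Finset.mem_filter] at h
    exact hrot M h.1.1 _
  · rintro ⟨M, e⟩ hM ⟨M', e'⟩ hM' heq
    simp only [Finset.mem_product, Finset.mem_filter, Finset.mem_range] at hM hM' heq
    have hM_eq := hback M hM.1.1 e hM.2.le
    have hM'_eq := hback M' hM'.1.1 e' hM'.2.le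
    rw [← heq] at hM'_eq
    have he : e = e' := (huniq _ (hrot M hM.1.1 _)).unique
      ⟨hM.2, by rw [hM_eq]; exact hM.1.2⟩ ⟨hM'.2, by rw [hM'_eq]; exact hM'.1.2⟩
    subst he
    rw [Prod.mk.injEq, ← hM_eq, ← hM'_eq]
    exact ⟨rfl, rfl⟩
  · intro L hL
    obtain ⟨d, ⟨hd, hP⟩, -⟩ := huniq L hL
    refine ⟨(L.rotate d, d), ?_, ?_⟩
    · simpa [Finset.mem_product, Finset.mem_filter, hd] using ⟨hrot L hL d, hP⟩
    · rw [List.rotate_rotate, Nat.add_sub_cancel' hd.le, ← hlen L hL, List.rotate_length]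

section ListsWith

variable {α : Type*} [DecidableEq α]

noncomputable def listsWith (s : Multiset α) : Finset (List α) := s.toList.permutations.toFinset

@[simp] lemma mem_listsWith {s : Multiset α} {L : List α} :
    L ∈ listsWith s ↔ (L : Multiset α) = s := by
  rw [listsWith, List.mem_toFinset, List.mem_permutations, ← Multiset.coe_eq_coe,
    Multiset.coe_toList]

lemma listsWith_eq_biUnion {s : Multiset α} (hs : s ≠ 0) :
    listsWith s = s.toFinset.biUnion fun x => (listsWith (s.erase x)).image (x :: ·) := by
  ext L
  simp only [Finset.mem_biUnion, Finset.mem_image, mem_listsWith, Multiset.mem_toFinset]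
  constructor
  · rintro rfl
    cases L with
    | nil => exact absurd rfl hs
    | cons x M => exact ⟨x, by simp, M, by simp, rfl⟩
  · rintro ⟨x, hx, M, hM, rfl⟩
    rw [← Multiset.cons_coe, hM, Multiset.cons_erase hx]

theorem card_listsWith_mul_prod_factorial (s : Multiset α) (F : Finset α)
    (hF : s.toFinset ⊆ F) :
    (listsWith s).card * ∏ x ∈ F, (s.count x).factorial = (Multiset.card s).factorial := by
  induction s using Multiset.strongInductionOn with
  | _ s ih =>
  rcases eq_or_ne s 0 with rfl | hs
  · simp [listsWith]
  have hdisj : (s.toFinset : Set α).PairwiseDisjoint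
      fun x => (listsWith (s.erase x)).image (x :: ·) :=
    fun x _ y _ hxy => Finset.disjoint_left.mpr fun L hx hy => by
      simp only [Finset.mem_image] at hx hy
      obtain ⟨M, -, rfl⟩ := hx
      obtain ⟨M', -, hM'⟩ := hy
      exact hxy (List.cons_eq_cons.mp hM').1.symm
  have hterm : ∀ x ∈ s.toFinset, ((listsWith (s.erase x)).image (x :: ·)).card *
      ∏ y ∈ F, (s.count y).factorial = s.count x * (Multiset.card s - 1).factorial := by
    intro x hx
    have hxs : x ∈ s := Multiset.mem_toFinset.mp hx
    have hprod : ∏ y ∈ F, (s.count y).factorial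
        = s.count x * ∏ y ∈ F, ((s.erase x).count y).factorial := by
      rw [← Finset.mul_prod_erase F _ (hF hx), ← Finset.mul_prod_erase F _ (hF hx),
        Multiset.count_erase_self, ← mul_assoc,
        Nat.mul_factorial_pred (Multiset.count_ne_zero.mpr hxs)]
      congr 1
      exact Finset.prod_congr rfl fun y hy => by
        rw [Multiset.count_erase_of_ne (Finset.ne_of_mem_erase hy)]
    rw [Finset.card_image_of_injective _ List.cons_injective, hprod, mul_left_comm,
      ih _ (Multiset.erase_lt.mpr hxs)
        ((Multiset.toFinset_subset.mpr (Multiset.erase_subset x s)).trans hF),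
      Multiset.card_erase_of_mem hxs]
    rfl
  rw [listsWith_eq_biUnion hs, Finset.card_biUnion hdisj, Finset.sum_mul,
    Finset.sum_congr rfl hterm,
    ← Finset.sum_mul, Multiset.toFinset_sum_count_eq]
  exact Nat.mul_factorial_pred (Multiset.card_pos.mpr hs).ne'

end ListsWith

theorem Multiset.eq_iff_forall_count_eq_of_card_eq {α : Type*} [DecidableEq α]
    {s t : Multiset α} {F : Finset α} (hs : s.toFinset ⊆ F)
    (hcard : Multiset.card t = Multiset.card s) : t = s ↔ ∀ x ∈ F, t.count x = s.count x := by
  refine ⟨fun h _ _ => h ▸ rfl, fun hcount => ?_⟩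
  refine (Multiset.eq_of_le_of_card_le (Multiset.le_iff_count.mpr fun x => ?_) hcard.le).symm
  by_cases hx : x ∈ F
  · exact (hcount x hx).ge
  · rw [Multiset.count_eq_zero.mpr fun h => hx (hs (Multiset.mem_toFinset.mpr h))]
    exact Nat.zero_le _

lemma ncard_setOf_isDyckWord_runLengths_eq {a b : ℕ} {s : Multiset ℕ} (hsum : s.sum = a)
    (hcard : Multiset.card s = b) :
    {w | IsDyckWord a b w ∧ (runLengths w : Multiset ℕ) = s}.ncard =
      ((listsWith s).filter (IsDyckRuns a b)).card := by
  suffices {w | IsDyckWord a b w ∧ (runLengths w : Multiset ℕ) = s} =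
      ofRunLengths '' ↑((listsWith s).filter (IsDyckRuns a b)) by
    rw [this, Set.ncard_image_of_injective _ ofRunLengths_injective, Set.ncard_coe_finset]
  ext w
  simp only [Set.mem_ofPred_eq, Set.mem_image, Finset.coe_filter, mem_listsWith]
  constructor
  · rintro ⟨hw, hs⟩
    have hsumL : (runLengths w).sum = a := by rw [← Multiset.sum_coe, hs, hsum]
    have hw' := ofRunLengths_runLengths (hsumL.trans hw.1.symm)
    rw [← hw'] at hw
    exact ⟨runLengths w, ⟨hs, (isDyckWord_ofRunLengths_iff.mp hw).2.2⟩, hw'⟩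
  · rintro ⟨L, ⟨hs, hL⟩, rfl⟩
    refine ⟨isDyckWord_ofRunLengths_iff.mpr ⟨?_, ?_, hL⟩, ?_⟩
    · rw [← Multiset.sum_coe, hs, hsum]
    · rw [← Multiset.coe_card, hs, hcard]
    · rw [runLengths_ofRunLengths, hs]

lemma card_listsWith_eq_card_filter_isDyckRuns_mul {a b : ℕ} (hab : a.Coprime b)
    {s : Multiset ℕ} (hsum : s.sum = a) (hcard : Multiset.card s = b) :
    (listsWith s).card = ((listsWith s).filter (IsDyckRuns a b)).card * b := by
  have hL : ∀ L ∈ listsWith s, L.sum = a ∧ L.length = b := fun L hL => by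
    rw [mem_listsWith] at hL
    rw [← Multiset.sum_coe, ← Multiset.coe_card, hL, hsum, hcard]
    exact ⟨rfl, rfl⟩
  refine card_eq_card_filter_mul_of_existsUnique_rotate (fun L h => (hL L h).2)
    (fun L h k => ?_) (fun L h => ?_)
  · rw [mem_listsWith] at h ⊢
    rw [← h]
    exact Multiset.coe_eq_coe.mpr (List.rotate_perm L k)
  · obtain ⟨rfl, rfl⟩ := hL L h
    exact existsUnique_isDyckRuns_rotate L hab

theorem stmt0_general (a b : ℕ) (hb : 0 < b) (hab : Nat.Coprime a b)
    (m : ℕ → ℕ)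
    (h1 : ∑ i ∈ Finset.range (a + 1), i * m i = a)
    (h2 : ∑ i ∈ Finset.range (a + 1), m i = b) :
    {w : List Bool | IsDyckWord a b w ∧
        ∀ i ≤ a, (runLengths w).count i = m i}.ncard *
      ∏ i ∈ Finset.range (a + 1), (m i).factorial = (b - 1).factorial := by
  set s : Multiset ℕ := ∑ i ∈ Finset.range (a + 1), Multiset.replicate (m i) i
  have hcount : ∀ i ∈ Finset.range (a + 1), s.count i = m i := fun i hi => by
    simp [s, Multiset.count_sum', Multiset.count_replicate, hi]
  have hsupp : s.toFinset ⊆ Finset.range (a + 1) := fun i hi => by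
    simp only [s, Multiset.mem_toFinset, Multiset.mem_sum, Finset.mem_range] at hi
    obtain ⟨j, hj, hij⟩ := hi
    rwa [Finset.mem_range, Multiset.eq_of_mem_replicate hij]
  have hcard : Multiset.card s = b := by simp [s, Multiset.card_sum, h2]
  have hsum : s.sum = a := by
    rw [Multiset.sum_sum]
    simpa [Multiset.sum_replicate, mul_comm] using h1
  have hwords : {w : List Bool | IsDyckWord a b w ∧ ∀ i ≤ a, (runLengths w).count i = m i} =
      {w | IsDyckWord a b w ∧ (runLengths w : Multiset ℕ) = s} := by
    ext w
    refine and_congr_right fun hw => ?_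
    rw [Multiset.eq_iff_forall_count_eq_of_card_eq hsupp
      (by rw [Multiset.coe_card, length_runLengths, hw.2.1, hcard])]
    simp only [Multiset.coe_count, Finset.mem_range, Nat.lt_succ_iff]
    exact forall₂_congr fun i hi => by rw [hcount i (Finset.mem_range.mpr (Nat.lt_succ_of_le hi))]
  have hperm := card_listsWith_mul_prod_factorial s _ hsupp
  rw [hcard, card_listsWith_eq_card_filter_isDyckRuns_mul hab hsum hcard,
    Finset.prod_congr rfl fun i hi => by rw [hcount i hi], ← Nat.mul_factorial_pred hb.ne']
    at hperm
  rw [hwords, ncard_setOf_isDyckWord_runLengths_eq hsum hcard]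
  exact Nat.eq_of_mul_eq_mul_left hb (by rw [← hperm]; ring)

/-- for coprime positive `a, b` and nonnegative integers
`m 0, …, m a` with `∑ i * m i = a` and `∑ m i = b`, the number of `(a,b)`-Dyck
paths having exactly `m i` vertical runs of length `i` for every `i ≤ a`
equals `(b-1)! / (m 0! ⋯ m a !)`. -/
theorem stmt0 (a b : ℕ) (ha : 0 < a) (hb : 0 < b) (hab : Nat.Coprime a b)
    (m : ℕ → ℕ)
    (h1 : ∑ i ∈ Finset.range (a + 1), i * m i = a)
    (h2 : ∑ i ∈ Finset.range (a + 1), m i = b) :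
    {w : List Bool | IsDyckWord a b w ∧
        ∀ i ≤ a, (runLengths w).count i = m i}.ncard *
      ∏ i ∈ Finset.range (a + 1), (m i).factorial = (b - 1).factorial :=
  stmt0_general a b hb hab m h1 h2
end

section
/- Let a and b be coprime positive integers and let w = w_1…w_{a+b} be any word in {N, E} with exactly a letters N and b letters E, with levels l_0, l_1, …, l_{a+b}. If 0 ≤ i < j ≤ a+b and l_i = l_j, then i = 0 and j = a+b. In particular, the levels l_1, l_2, …, l_{a+b} are pairwise distinct. -/
/-- The level `l_i = b·(#N) − a·(#E)` of the lattice point reached after the first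
`i` steps of the word `w` (with `true` = N, `false` = E). -/
def levelAt (a b : ℕ) (w : List Bool) (i : ℕ) : ℤ :=
  (b : ℤ) * (w.take i).count true - (a : ℤ) * (w.take i).count false

lemma count_true_add_count_false (w : List Bool) :
    w.count true + w.count false = w.length := by
  induction w with
  | nil => simp
  | cons x xs ih => cases x <;> simp [List.count_cons] <;> omega

lemma take_sublist_take (w : List Bool) {i j : ℕ} (hij : i ≤ j) :
    List.Sublist (w.take i) (w.take j) := by
  have : w.take i = (w.take j).take i := by
    rw [List.take_take, min_eq_left hij]
  rw [this]
  exact List.take_sublist _ _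

/-- for coprime positive `a, b` and any word with `a` norths and
`b` easts, if two levels `l_i = l_j` with `i < j ≤ a+b`, then `i = 0` and
`j = a+b`; in particular `l_1, …, l_{a+b}` are pairwise distinct. -/
theorem stmt1 (a b : ℕ) (ha : 0 < a) (hb : 0 < b) (hab : Nat.Coprime a b)
    (w : List Bool) (hN : w.count true = a) (hE : w.count false = b) :
    (∀ i j : ℕ, i < j → j ≤ a + b →
      levelAt a b w i = levelAt a b w j → i = 0 ∧ j = a + b) ∧
    (∀ i j : ℕ, 1 ≤ i → i < j → j ≤ a + b →
      levelAt a b w i ≠ levelAt a b w j) := by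
  have hlen : w.length = a + b := by
    have := count_true_add_count_false w; omega
  have main : ∀ i j : ℕ, i < j → j ≤ a + b →
      levelAt a b w i = levelAt a b w j → i = 0 ∧ j = a + b := by
    intro i j hij hj heq
    set ti := (w.take i).count true with hti
    set fi := (w.take i).count false with hfi
    set tj := (w.take j).count true with htj
    set fj := (w.take j).count false with hfj
    have hsub : List.Sublist (w.take i) (w.take j) := take_sublist_take w hij.le
    have hT : ti ≤ tj := hsub.count_le true
    have hF : fi ≤ fj := hsub.count_le false
    have h1 : ti + fi = i := by
      have := count_true_add_count_false (w.take i)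
      rw [List.length_take, hlen] at this
      omega
    have h2 : tj + fj = j := by
      have := count_true_add_count_false (w.take j)
      rw [List.length_take, hlen] at this
      omega
    have hta : tj ≤ a := by
      rw [← hN]; exact (List.take_sublist j w).count_le true
    have hfb : fj ≤ b := by
      rw [← hE]; exact (List.take_sublist j w).count_le false
    simp only [levelAt, ← hti, ← hfi, ← htj, ← hfj] at heq
    have key : b * (tj - ti) = a * (fj - fi) := by
      zify [hT, hF]; linarith
    set t := tj - ti with ht
    set f := fj - fi with hf
    have hdvd : a ∣ t := hab.dvd_of_dvd_mul_left ⟨f, key⟩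
    rcases Nat.eq_zero_or_pos t with ht0 | htpos
    · exfalso
      have : a * f = 0 := by rw [← key, ht0, mul_zero]
      have hf0 : f = 0 := by
        rcases Nat.mul_eq_zero.mp this with h | h
        · omega
        · exact h
      omega
    · have hta' : t = a := le_antisymm (by omega) (Nat.le_of_dvd htpos hdvd)
      have hfb' : f = b := by
        have : a * b = a * f := by rw [← key, hta', mul_comm]
        exact (Nat.eq_of_mul_eq_mul_left ha this).symm
      omega
  refine ⟨main, ?_⟩
  intro i j h1i hij hj heq
  have := main i j hij hj heq
  omega
end

section
/- Let a and b be coprime positive integers and let w be a word in {N, E} with exactly a letters N and b letters E that ends in E, written in block form w = N^{r_1} E N^{r_2} E … N^{r_b} E with r_1 + … + r_b = a. For 0 ≤ k < b, let w^{(k)} = N^{r_{k+1}} E … N^{r_b} E N^{r_1} E … N^{r_k} E be the cyclic shift of w by k blocks. Then the b words w^{(0)}, w^{(1)}, …, w^{(b−1)} are pairwise distinct, and exactly one of them is an (a,b)-Dyck path. -/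
/-- The word `N^{r_1} E N^{r_2} E ⋯ N^{r_m} E` determined by a list of
block lengths `r = [r_1, …, r_m]`. -/
def blocksToWord (r : List ℕ) : List Bool :=
  r.flatMap fun k => List.replicate k true ++ [false]

namespace Stmt2Aux

lemma blocks_cons (k : ℕ) (s : List ℕ) :
    blocksToWord (k :: s) = (List.replicate k true ++ [false]) ++ blocksToWord s := by
  simp [blocksToWord]

lemma blocks_append (x y : List ℕ) :
    blocksToWord (x ++ y) = blocksToWord x ++ blocksToWord y := by
  simp [blocksToWord]

lemma count_true_blocks (s : List ℕ) : (blocksToWord s).count true = s.sum := by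
  induction s with
  | nil => simp [blocksToWord]
  | cons k s ih => simp [blocks_cons, List.count_append, List.count_replicate, ih]

lemma count_false_blocks (s : List ℕ) : (blocksToWord s).count false = s.length := by
  induction s with
  | nil => simp [blocksToWord]
  | cons k s ih => simp [blocks_cons, List.count_append, List.count_replicate, ih]

lemma prefix_split {α : Type*} {p x y : List α} (h : p <+: x ++ y) :
    p <+: x ∨ ∃ q, q <+: y ∧ p = x ++ q := by
  rcases le_or_gt p.length x.length with hl | hl
  · exact Or.inl (List.prefix_of_prefix_length_le h (x.prefix_append y) hl)
  · right
    obtain ⟨q, rfl⟩ := List.prefix_of_prefix_length_le (x.prefix_append y) h hl.le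
    refine ⟨q, ?_, rfl⟩
    obtain ⟨t, ht⟩ := h
    rw [List.append_assoc] at ht
    exact ⟨t, List.append_cancel_left ht⟩

lemma prefix_counts (s : List ℕ) (p : List Bool) (h : p <+: blocksToWord s) :
    p.count false ≤ s.length ∧ (s.take (p.count false)).sum ≤ p.count true := by
  induction s generalizing p with
  | nil =>
    simp only [blocksToWord, List.flatMap_nil, List.prefix_nil] at h
    subst h; simp
  | cons k s ih =>
    rw [blocks_cons] at h
    rcases prefix_split h with h1 | ⟨q, hq, rfl⟩
    · have hfull : p.count false = 0 ∨ p = List.replicate k true ++ [false] := by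
        rcases prefix_split h1 with h2 | ⟨q, hq, rfl⟩
        · left
          have := h2.sublist.count_le false
          simpa [List.count_replicate] using this
        · rcases q with _ | ⟨x, q⟩
          · left; simp [List.count_append, List.count_replicate]
          · right
            obtain ⟨hx, hq'⟩ := List.cons_prefix_cons.mp hq
            rw [List.prefix_nil] at hq'
            rw [hx, hq']
      rcases hfull with h0 | rfl
      · simp [h0]
      · have hf : (List.replicate k true ++ [false]).count false = 1 := by
          simp [List.count_append, List.count_replicate]
        have ht : (List.replicate k true ++ [false]).count true = k := by
          simp [List.count_append, List.count_replicate]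
        rw [hf, ht]
        exact ⟨by simp, by simp [show (k :: s).take 1 = [k] from rfl]⟩
    · obtain ⟨h1, h2⟩ := ih q hq
      have hf : ((List.replicate k true ++ [false]) ++ q).count false = q.count false + 1 := by
        simp [List.count_append, List.count_replicate]
      have ht : ((List.replicate k true ++ [false]) ++ q).count true = k + q.count true := by
        simp [List.count_append, List.count_replicate]
      rw [hf, ht]
      constructor
      · simp only [List.length_cons]; omega
      · rw [List.take_succ_cons, List.sum_cons]
        exact Nat.add_le_add_left h2 k

lemma dyck_iff (a b : ℕ) (s : List ℕ) (hL : s.length = b) (hS : s.sum = a) :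
    IsDyckWord a b (blocksToWord s) ↔ ∀ i ≤ b, a * i ≤ b * (s.take i).sum := by
  constructor
  · rintro ⟨-, -, h⟩ i hi
    have hp : blocksToWord (s.take i) <+: blocksToWord s := by
      conv_rhs => rw [← List.take_append_drop i s]
      rw [blocks_append]
      exact List.prefix_append _ _
    have := h _ hp
    rwa [count_false_blocks, count_true_blocks, List.length_take,
      min_eq_left (hL ▸ hi)] at this
  · intro h
    refine ⟨by rw [count_true_blocks, hS], by rw [count_false_blocks, hL], ?_⟩
    intro p hp
    obtain ⟨h1, h2⟩ := prefix_counts s p hp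
    calc a * p.count false ≤ b * (s.take (p.count false)).sum := h (p.count false) (hL ▸ h1)
      _ ≤ b * p.count true := Nat.mul_le_mul_left b h2

/-- cyclic partial sums -/
def psum (r : List ℕ) (n : ℕ) : ℕ := ∑ i ∈ Finset.range n, r.getD (i % r.length) 0

lemma psum_succ (r : List ℕ) (n : ℕ) :
    psum r (n + 1) = psum r n + r.getD (n % r.length) 0 :=
  Finset.sum_range_succ _ n

lemma psum_len (r : List ℕ) : psum r r.length = r.sum := by
  have : ∀ i ∈ Finset.range r.length, r.getD (i % r.length) 0 = r.getD i 0 := by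
    intro i hi
    rw [Nat.mod_eq_of_lt (Finset.mem_range.mp hi)]
  rw [psum, Finset.sum_congr rfl this]
  clear this
  induction r with
  | nil => simp
  | cons k t ih =>
    rw [List.length_cons, Finset.sum_range_succ', List.sum_cons]
    simp only [List.getD_cons_succ, List.getD_cons_zero]
    rw [ih, Nat.add_comm]

lemma psum_period (r : List ℕ) (n : ℕ) :
    psum r (n + r.length) = psum r n + r.sum := by
  induction n with
  | zero =>
    simp only [Nat.zero_add]
    rw [psum_len]
    simp [psum]
  | succ n ih =>
    have : n + 1 + r.length = (n + r.length) + 1 := by omega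
    rw [this, psum_succ, ih, psum_succ]
    rw [Nat.add_mod_right]
    omega

lemma psum_period_mul (r : List ℕ) (n m : ℕ) :
    psum r (n + m * r.length) = psum r n + m * r.sum := by
  induction m with
  | zero => simp
  | succ m ih =>
    have : n + (m + 1) * r.length = (n + m * r.length) + r.length := by ring
    rw [this, psum_period, ih, Nat.succ_mul]
    omega

lemma sum_take_rotate (r : List ℕ) (k i : ℕ) (hi : i ≤ r.length) :
    ((r.rotate k).take i).sum + psum r k = psum r (k + i) := by
  induction i with
  | zero => simp
  | succ i ih =>
    have hi' : i < r.length := hi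
    have hilen : i < (r.rotate k).length := by rw [List.length_rotate]; exact hi'
    rw [List.sum_take_succ _ i hilen, List.getElem_rotate]
    have : k + (i + 1) = (k + i) + 1 := by omega
    rw [this, psum_succ]
    have hmod : (i + k) % r.length = (k + i) % r.length := by rw [Nat.add_comm]
    have hget : r[(i + k) % r.length]'(Nat.mod_lt _ (by omega)) = r.getD ((k + i) % r.length) 0 := by
      rw [List.getD_eq_getElem r 0 (Nat.mod_lt _ (by omega))]
      congr 1
    rw [hget] at *
    have := ih (le_of_lt hi')
    omega

/-- the integer height function -/
def fh (a : ℕ) (r : List ℕ) (n : ℕ) : ℤ := (r.length : ℤ) * psum r n - a * n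

lemma fh_period (a : ℕ) (r : List ℕ) (hsum : r.sum = a) (n : ℕ) :
    fh a r (n + r.length) = fh a r n := by
  unfold fh
  rw [psum_period, hsum]
  push_cast
  ring

lemma dyck_iff_fh (a b : ℕ) (r : List ℕ) (hlen : r.length = b) (hsum : r.sum = a) (k : ℕ) :
    IsDyckWord a b (blocksToWord (r.rotate k)) ↔ ∀ i ≤ b, fh a r k ≤ fh a r (k + i) := by
  have hLr : (r.rotate k).length = b := by rw [List.length_rotate, hlen]
  have hSr : (r.rotate k).sum = a := by rw [(List.rotate_perm r k).sum_eq, hsum]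
  rw [dyck_iff a b _ hLr hSr]
  apply forall_congr'
  intro i
  apply imp_congr_right
  intro hi
  have hst := sum_take_rotate r k i (hlen ▸ hi)
  obtain ⟨T, hT⟩ : ∃ T, ((r.rotate k).take i).sum = T := ⟨_, rfl⟩
  rw [hT] at hst
  rw [hT]
  unfold fh
  have hc : (psum r (k + i) : ℤ) = (T : ℤ) + psum r k := by exact_mod_cast hst.symm
  rw [hlen, hc]
  constructor
  · intro h
    have h' : (a : ℤ) * i ≤ (b : ℤ) * T := by exact_mod_cast h
    push_cast
    linarith
  · intro h
    push_cast at h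
    have h' : (a : ℤ) * i ≤ (b : ℤ) * T := by linarith
    exact_mod_cast h'

lemma fh_inj (a b : ℕ) (hab : Nat.Coprime a b) (r : List ℕ) (hlen : r.length = b)
    {k l : ℕ} (hk : k < b) (hl : l < b) (h : fh a r k = fh a r l) : k = l := by
  unfold fh at h
  rw [hlen] at h
  have hdvd : (b : ℤ) ∣ (a : ℤ) * ((k : ℤ) - l) := by
    refine ⟨(psum r k : ℤ) - psum r l, ?_⟩
    linarith [h]
  have hdvd2 : b ∣ (((a : ℤ) * ((k : ℤ) - l)).natAbs) := by
    have := Int.natAbs_dvd_natAbs.mpr hdvd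
    simpa using this
  rw [Int.natAbs_mul, Int.natAbs_natCast] at hdvd2
  have hdvd3 : b ∣ ((k : ℤ) - l).natAbs := (Nat.Coprime.dvd_of_dvd_mul_left (hab.symm) hdvd2)
  have habs : ((k : ℤ) - l).natAbs < b := by omega
  have := Nat.eq_zero_of_dvd_of_lt hdvd3
  omega

lemma rotate_ne (a b : ℕ) (hab : Nat.Coprime a b) (r : List ℕ) (hlen : r.length = b)
    (hsum : r.sum = a) {k l : ℕ} (hk : k < b) (hl : l < b) (hkl : k < l) :
    r.rotate k ≠ r.rotate l := by
  intro heq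
  have hb : 0 < b := by omega
  set d := l - k with hd
  have hd0 : 0 < d := by omega
  have hdb : d < b := by omega
  -- getD equality
  have hget : ∀ i : ℕ, r.getD ((i + k) % b) 0 = r.getD ((i + l) % b) 0 := by
    intro i
    have hib : i % b < b := Nat.mod_lt _ hb
    have h1 : (r.rotate k).getD (i % b) 0 = (r.rotate l).getD (i % b) 0 := by rw [heq]
    have hlt : i % b < (r.rotate k).length := by rw [List.length_rotate, hlen]; exact hib
    have hlt' : i % b < (r.rotate l).length := by rw [List.length_rotate, hlen]; exact hib
    rw [List.getD_eq_getElem _ 0 hlt, List.getD_eq_getElem _ 0 hlt',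
      List.getElem_rotate, List.getElem_rotate] at h1
    have e1 : (i % b + k) % r.length = (i + k) % b := by rw [hlen, Nat.mod_add_mod]
    have e2 : (i % b + l) % r.length = (i + l) % b := by rw [hlen, Nat.mod_add_mod]
    have h2 : r.getD ((i % b + k) % r.length) 0 = r.getD ((i % b + l) % r.length) 0 := by
      rw [List.getD_eq_getElem r 0 (by rw [hlen] at *; exact Nat.mod_lt _ hb),
        List.getD_eq_getElem r 0 (by rw [hlen] at *; exact Nat.mod_lt _ hb)]
      exact h1
    rwa [e1, e2] at h2
  -- psum shift equality
  have hpsum : ∀ i : ℕ, psum r (k + i) + psum r l = psum r (l + i) + psum r k := by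
    intro i
    induction i with
    | zero => simp only [Nat.add_zero]; omega
    | succ i ih =>
      have e1 : k + (i + 1) = (k + i) + 1 := by omega
      have e2 : l + (i + 1) = (l + i) + 1 := by omega
      rw [e1, e2, psum_succ, psum_succ, hlen]
      have : (k + i) % b = (i + k) % b := by rw [Nat.add_comm]
      rw [this]
      have : (l + i) % b = (i + l) % b := by rw [Nat.add_comm]
      rw [this, hget i]
      omega
  -- iterate
  have hiter : ∀ m : ℕ, psum r (k + m * d) + m * psum r k = psum r k + m * psum r l := by
    intro m
    induction m with
    | zero => simp
    | succ m ih =>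
      have e1 : k + (m + 1) * d = l + m * d := by rw [hd]; ring_nf; omega
      have h2 := hpsum (m * d)
      rw [e1, Nat.succ_mul, Nat.succ_mul]
      omega
  have hfin := hiter b
  have hper : psum r (k + b * d) = psum r k + d * a := by
    have : k + b * d = k + d * r.length := by rw [hlen]; ring
    rw [this, psum_period_mul, hsum]
  rw [hper] at hfin
  -- b ∣ d * a
  have hdvd : b ∣ d * a := by
    have hz : (d : ℤ) * a = (b : ℤ) * ((psum r l : ℤ) - psum r k) := by
      have h1 : (psum r k : ℤ) + d * a + b * psum r k = psum r k + b * psum r l := by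
        exact_mod_cast hfin
      linarith
    have : (b : ℤ) ∣ (d : ℤ) * a := ⟨_, hz⟩
    exact_mod_cast this
  have := Nat.Coprime.dvd_of_dvd_mul_right (hab.symm) hdvd
  have := Nat.le_of_dvd hd0 this
  omega

end Stmt2Aux

open Stmt2Aux

/-- let `a, b` be coprime positive integers and let
`w = N^{r_1} E ⋯ N^{r_b} E` with `r_1 + ⋯ + r_b = a`.  The `b` cyclic shifts
of `w` by whole blocks are pairwise distinct, and exactly one of them is an
`(a,b)`-Dyck path. -/
theorem stmt2 (a b : ℕ) (ha : 0 < a) (hb : 0 < b) (hab : Nat.Coprime a b)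
    (r : List ℕ) (hlen : r.length = b) (hsum : r.sum = a) :
    (∀ k l : ℕ, k < b → l < b →
      blocksToWord (r.rotate k) = blocksToWord (r.rotate l) → k = l) ∧
    ∃! k : ℕ, k < b ∧ IsDyckWord a b (blocksToWord (r.rotate k)) := by
  have binj : ∀ s t : List ℕ, blocksToWord s = blocksToWord t → s = t := by
    intro s
    induction s with
    | nil =>
      intro t h
      cases t with
      | nil => rfl
      | cons k t =>
        exfalso
        have := congrArg (List.count false) h
        rw [count_false_blocks, count_false_blocks] at this
        simp at this
    | cons k s ih =>
      intro t h
      cases t with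
      | nil =>
        exfalso
        have := congrArg (List.count false) h
        rw [count_false_blocks, count_false_blocks] at this
        simp at this
      | cons k' t =>
        rw [blocks_cons, blocks_cons] at h
        -- peel off replicates
        have hkk : k = k' ∧ blocksToWord s = blocksToWord t := by
          clear ih
          induction k generalizing k' with
          | zero =>
            cases k' with
            | zero => simpa using h
            | succ k' => simp [List.replicate_succ] at h
          | succ k ihk =>
            cases k' with
            | zero => simp [List.replicate_succ] at h
            | succ k' =>
              simp only [List.replicate_succ, List.cons_append, List.cons.injEq, true_and] at h
              obtain ⟨h1, h2⟩ := ihk k' h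
              exact ⟨by omega, h2⟩
        rw [hkk.1, ih _ hkk.2]
  constructor
  · intro k l hk hl hw
    have heq := binj _ _ hw
    rcases Nat.lt_trichotomy k l with h | h | h
    · exact absurd heq (rotate_ne a b hab r hlen hsum hk hl h)
    · exact h
    · exact absurd heq.symm (rotate_ne a b hab r hlen hsum hl hk h)
  · obtain ⟨k₀, hk₀mem, hk₀min⟩ :=
      Finset.exists_min_image (Finset.range b) (fh a r) ⟨0, Finset.mem_range.mpr hb⟩
    have hk₀ : k₀ < b := Finset.mem_range.mp hk₀mem
    have hmin : ∀ m, m < b → fh a r k₀ ≤ fh a r m := fun m hm =>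
      hk₀min m (Finset.mem_range.mpr hm)
    refine ⟨k₀, ⟨hk₀, ?_⟩, ?_⟩
    · rw [dyck_iff_fh a b r hlen hsum]
      intro i hi
      rcases lt_or_ge (k₀ + i) b with hlt | hge
      · exact hmin _ hlt
      · have e : k₀ + i = (k₀ + i - b) + r.length := by rw [hlen]; omega
        rw [e, fh_period a r hsum]
        exact hmin _ (by omega)
    · rintro k ⟨hk, hdk⟩
      rw [dyck_iff_fh a b r hlen hsum] at hdk
      have hkmin : ∀ m, m < b → fh a r k ≤ fh a r m := by
        intro m hm
        rcases le_or_gt k m with hle | hlt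
        · have := hdk (m - k) (by omega)
          have e : k + (m - k) = m := by omega
          rwa [e] at this
        · have := hdk (m + b - k) (by omega)
          have e : k + (m + b - k) = m + r.length := by rw [hlen]; omega
          rw [e, fh_period a r hsum] at this
          exact this
      exact fh_inj a b hab r hlen hk hk₀
        (le_antisymm (hkmin _ hk₀) (hmin _ hk))
end

section
/- Let a and b be coprime positive integers. Then the number of (a,b)-Dyck paths equals (a+b−1)!/(a!·b!), i.e., equals (1/(a+b))·binomial(a+b, a). -/
theorem List.forall_prefix_append_iff {α : Type*} {P : List α → Prop} {u v : List α} :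
    (∀ p, p <+: u ++ v → P p) ↔ (∀ p, p <+: u → P p) ∧ ∀ q, q <+: v → P (u ++ q) := by
  refine ⟨fun h => ⟨fun p hp => h p (hp.trans (prefix_append u v)),
    fun q hq => h _ ((prefix_append_right_inj u).2 hq)⟩, fun ⟨hu, hv⟩ p hp => ?_⟩
  rcases prefix_or_prefix_of_prefix hp (prefix_append u v) with hpu | ⟨q, rfl⟩
  · exact hu p hpu
  · exact hv q ((prefix_append_right_inj u).1 hp)

theorem List.count_true_ofFn {n : ℕ} (f : Fin n → Bool) :
    (List.ofFn f).count true = (Finset.univ.filter fun i => f i = true).card := by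
  rw [List.ofFn_eq_map, List.count_eq_length_filter, Finset.card_def, Finset.filter_val,
    Finset.val_univ_fin, Multiset.filter_coe, Multiset.coe_card, List.filter_map]
  simp [Function.comp_def]

theorem ncard_length_count_true (n a : ℕ) :
    {w : List Bool | w.length = n ∧ w.count true = a}.ncard = n.choose a := by
  have hW : {w : List Bool | w.length = n ∧ w.count true = a} =
      (fun s : Finset (Fin n) => List.ofFn fun i => decide (i ∈ s)) ''
        ↑(Finset.univ.powersetCard a : Finset (Finset (Fin n))) := by
    ext w
    simp only [Set.mem_ofPred_eq, Set.mem_image, Finset.mem_coe, Finset.mem_powersetCard,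
      Finset.subset_univ, true_and]
    constructor
    · rintro ⟨rfl, hw⟩
      refine ⟨Finset.univ.filter fun i => w.get i = true, ?_, ?_⟩
      · rw [← hw, ← List.count_true_ofFn, List.ofFn_get]
      · simp
    · rintro ⟨s, hs, rfl⟩
      simp [List.count_true_ofFn, hs]
  have hinj : Function.Injective fun s : Finset (Fin n) => List.ofFn fun i => decide (i ∈ s) :=
    fun s t h => Finset.ext fun i => by simpa using congrFun (List.ofFn_injective h) i
  rw [hW, Set.ncard_image_of_injective _ hinj, Set.ncard_coe_finset, Finset.card_powersetCard,
    Finset.card_univ, Fintype.card_fin]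

theorem Nat.Coprime.add_pos {a b : ℕ} (h : Nat.Coprime a b) : 0 < a + b :=
  Nat.pos_of_ne_zero fun h0 => by simp_all [Nat.add_eq_zero_iff]

section Dyck

variable {a b : ℕ}

def dyckWeight (a b : ℕ) (w : List Bool) : ℤ :=
  b * w.count true - a * w.count false

@[simp]
theorem dyckWeight_append (u v : List Bool) :
    dyckWeight a b (u ++ v) = dyckWeight a b u + dyckWeight a b v := by
  simp only [dyckWeight, List.count_append]
  push_cast
  ring

theorem dyckWeight_eq (w : List Bool) :
    dyckWeight a b w = (a + b) * w.count true - a * w.length := by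
  rw [dyckWeight, ← List.count_true_add_count_false w]
  push_cast
  ring

theorem isDyckWord_iff {w : List Bool} :
    IsDyckWord a b w ↔
      w.count true = a ∧ w.count false = b ∧ ∀ p, p <+: w → 0 ≤ dyckWeight a b p := by
  simp only [IsDyckWord, dyckWeight, sub_nonneg]
  norm_cast

theorem IsDyckWord.length_eq {w : List Bool} (h : IsDyckWord a b w) : w.length = a + b := by
  rw [← List.count_true_add_count_false w, h.1, h.2.1]

theorem forall_prefix_swap_nonneg_iff {u v : List Bool}
    (h : dyckWeight a b u + dyckWeight a b v = 0) :
    (∀ p, p <+: v ++ u → 0 ≤ dyckWeight a b p) ↔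
      ∀ q, q <+: u ++ v → dyckWeight a b u ≤ dyckWeight a b q := by
  simp only [List.forall_prefix_append_iff, dyckWeight_append]
  constructor <;> rintro ⟨h₁, h₂⟩
  · exact ⟨fun q hq => by linarith [h₂ q hq], fun p hp => by linarith [h₁ p hp]⟩
  · exact ⟨fun p hp => by linarith [h₂ p hp], fun q hq => by linarith [h₁ q hq]⟩

theorem isDyckWord_rotate_iff {w : List Bool} (hT : w.count true = a)
    (hF : w.count false = b) {k : ℕ} (hk : k ≤ w.length) :
    IsDyckWord a b (w.rotate k) ↔
      ∀ q, q <+: w → dyckWeight a b (w.take k) ≤ dyckWeight a b q := by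
  have hsum : dyckWeight a b (w.take k) + dyckWeight a b (w.drop k) = 0 := by
    rw [← dyckWeight_append, List.take_append_drop, dyckWeight, hT, hF]
    ring
  rw [isDyckWord_iff, (List.rotate_perm w k).count_eq, (List.rotate_perm w k).count_eq,
    List.rotate_eq_drop_append_take hk, forall_prefix_swap_nonneg_iff hsum,
    List.take_append_drop]
  simp [hT, hF]

theorem length_eq_of_dyckWeight_eq (hab : Nat.Coprime a b) {p q : List Bool}
    (hp : p.length < a + b) (hq : q.length < a + b)
    (h : dyckWeight a b p = dyckWeight a b q) : p.length = q.length := by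
  rw [dyckWeight_eq, dyckWeight_eq] at h
  have hcop : IsCoprime ((a + b : ℕ) : ℤ) (a : ℤ) :=
    Nat.isCoprime_iff_coprime.2 (Nat.coprime_self_add_left.2 hab.symm)
  have hdvd : ((a + b : ℕ) : ℤ) ∣ (a : ℤ) * (q.length - p.length) :=
    ⟨q.count true - p.count true, by push_cast; linarith⟩
  exact (Nat.modEq_iff_dvd.2 (hcop.dvd_of_dvd_mul_left hdvd)).eq_of_lt_of_lt hp hq

theorem exists_isDyckWord_rotate {w : List Bool} (hT : w.count true = a)
    (hF : w.count false = b) (hw : 0 < w.length) :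
    ∃ k < w.length, IsDyckWord a b (w.rotate k) := by
  obtain ⟨q, hq, hmin⟩ := w.inits.toFinset.exists_min_image (dyckWeight a b)
    ⟨[], by simp⟩
  simp only [List.mem_toFinset, List.mem_inits] at hq hmin
  refine ⟨q.length % w.length, Nat.mod_lt _ hw, ?_⟩
  rw [List.rotate_mod, isDyckWord_rotate_iff hT hF hq.length_le,
    ← List.prefix_iff_eq_take.1 hq]
  exact hmin

theorem modEq_of_isDyckWord_rotate (hab : Nat.Coprime a b) {w : List Bool}
    {i j : ℕ} (hi : IsDyckWord a b (w.rotate i)) (hj : IsDyckWord a b (w.rotate j)) :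
    i ≡ j [MOD a + b] := by
  have hT : w.count true = a := (List.rotate_perm w i).count_eq true ▸ hi.1
  have hF : w.count false = b := (List.rotate_perm w i).count_eq false ▸ hi.2.1
  have hlen : w.length = a + b := by rw [← List.count_true_add_count_false w, hT, hF]
  have hpos := hab.add_pos
  rw [← List.rotate_mod, hlen] at hi hj
  have hi' := Nat.mod_lt i hpos
  have hj' := Nat.mod_lt j hpos
  rw [isDyckWord_rotate_iff hT hF (by omega)] at hi hj
  have h := length_eq_of_dyckWeight_eq hab (p := w.take (i % (a + b)))
    (q := w.take (j % (a + b))) (by rw [List.length_take]; omega)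
    (by rw [List.length_take]; omega)
    (le_antisymm (hi _ (List.take_prefix _ _)) (hj _ (List.take_prefix _ _)))
  show i % (a + b) = j % (a + b)
  simpa [hlen, hi'.le, hj'.le] using h

theorem IsDyckWord.rotate_inj (hab : Nat.Coprime a b) {d d' : List Bool} {k k' : ℕ}
    (hd : IsDyckWord a b d) (hd' : IsDyckWord a b d') (hk : k < a + b) (hk' : k' < a + b)
    (h : d.rotate k = d'.rotate k') : d = d' ∧ k = k' := by
  have hd'_eq : d.rotate (k + (a + b - k')) = d' := by
    rw [← List.rotate_rotate, h, List.rotate_rotate, Nat.add_sub_cancel' hk'.le,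
      ← hd'.length_eq, List.rotate_length]
  have h0 : 0 ≡ k + (a + b - k') [MOD a + b] :=
    modEq_of_isDyckWord_rotate hab (d.rotate_zero ▸ hd) (hd'_eq ▸ hd')
  have hkk' : k = k' := by
    refine Nat.ModEq.eq_of_lt_of_lt (Nat.ModEq.add_right_cancel' (a + b - k') ?_) hk hk'
    rw [Nat.add_sub_cancel' hk'.le]
    exact h0.symm.trans (Nat.modEq_zero_iff_dvd.2 dvd_rfl).symm
  subst hkk'
  exact ⟨List.rotate_eq_rotate.1 h, rfl⟩

theorem ncard_isDyckWord_mul (hab : Nat.Coprime a b) :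
    {w | IsDyckWord a b w}.ncard * (a + b) = (a + b).choose a := by
  set D := {w | IsDyckWord a b w}
  set W := {w : List Bool | w.length = a + b ∧ w.count true = a}
  have hpos : 0 < a + b := hab.add_pos
  let rot : D × Fin (a + b) → W := fun dk =>
    ⟨dk.1.1.rotate dk.2, by
      rw [Set.mem_ofPred_eq, List.length_rotate, (List.rotate_perm _ _).count_eq]
      exact ⟨dk.1.2.length_eq, dk.1.2.1⟩⟩
  have hrot : Function.Bijective rot := by
    constructor
    · rintro ⟨⟨d, hd⟩, k, hk⟩ ⟨⟨d', hd'⟩, k', hk'⟩ h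
      obtain ⟨rfl, rfl⟩ := hd.rotate_inj hab hd' hk hk' (Subtype.mk.inj h)
      rfl
    · rintro ⟨w, hlen, hT⟩
      have hF : w.count false = b := by
        have := List.count_true_add_count_false w
        omega
      obtain ⟨k, hk, hd⟩ := exists_isDyckWord_rotate hT hF (hlen ▸ hpos)
      refine ⟨⟨⟨w.rotate k, hd⟩, (a + b - k) % (a + b), Nat.mod_lt _ hpos⟩, ?_⟩
      simp only [rot, Subtype.mk.injEq]
      rw [← hlen, ← List.length_rotate w k, List.rotate_mod, List.rotate_rotate,
        List.length_rotate, Nat.add_sub_cancel' hk.le, List.rotate_length]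
  rw [← ncard_length_count_true, ← Nat.card_coe_set_eq, ← Nat.card_coe_set_eq,
    ← Nat.card_congr (Equiv.ofBijective rot hrot), Nat.card_prod, Nat.card_fin]

end Dyck

theorem stmt3_general (a b : ℕ) (hab : Nat.Coprime a b) :
    {w : List Bool | IsDyckWord a b w}.ncard * (a.factorial * b.factorial) =
      (a + b - 1).factorial := by
  have hpos := hab.add_pos
  apply Nat.eq_of_mul_eq_mul_left hpos
  calc (a + b) * ({w | IsDyckWord a b w}.ncard * (a.factorial * b.factorial))
      = {w | IsDyckWord a b w}.ncard * (a + b) * a.factorial * b.factorial := by ring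
    _ = (a + b).choose a * a.factorial * (a + b - a).factorial := by
      rw [ncard_isDyckWord_mul hab, Nat.add_sub_cancel_left]
    _ = (a + b) * (a + b - 1).factorial := by
      rw [Nat.choose_mul_factorial_mul_factorial (Nat.le_add_right a b),
        Nat.mul_factorial_pred hpos.ne']

/-- for coprime positive integers `a, b`, the number of
`(a,b)`-Dyck paths equals `(a+b−1)!/(a!·b!)`. -/
theorem stmt3 (a b : ℕ) (ha : 0 < a) (hb : 0 < b) (hab : Nat.Coprime a b) :
    {w : List Bool | IsDyckWord a b w}.ncard * (a.factorial * b.factorial) =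
      (a + b - 1).factorial :=
  stmt3_general a b hab
end

section
/- Let a and b be coprime positive integers, and let σ be a permutation of {1,…,a} whose cycle decomposition (including fixed points as 1-cycles) has exactly k cycles. Then the number of (a,b)-parking functions f with f ∘ σ = f equals b^{k−1}. -/
/-- An `(a,b)`-parking function is `f : Fin a → ℕ` such that for every
`i ∈ {1,…,a}` at least `i` of the values `f j` satisfy `a·f(j) ≤ b·(i−1)`. -/
def IsParkingFunction (a b : ℕ) (f : Fin a → ℕ) : Prop :=
  ∀ i : ℕ, 1 ≤ i → i ≤ a →
    i ≤ (Finset.univ.filter fun j : Fin a => a * f j ≤ b * (i - 1)).card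

namespace Stmt4Aux

open Finset

variable {a b : ℕ}

lemma cnt_eq_sum (w : Fin a → ℕ) (s : ℕ) :
    (univ.filter fun j => w j < s).card
      = ∑ t ∈ range s, (univ.filter fun j => w j = t).card := by
  classical
  rw [Finset.card_eq_sum_card_fiberwise (f := w) (t := range s)
    (fun j hj => mem_range.mpr (mem_filter.mp hj).2)]
  refine Finset.sum_congr rfl fun t ht => ?_
  congr 1
  ext j
  simp only [mem_filter, mem_univ, true_and, filter_filter]
  exact ⟨fun h => h.2, fun h => ⟨h ▸ mem_range.mp ht, h⟩⟩

lemma park_iff (ha : 0 < a) (hb : 0 < b) (w : Fin a → ℕ) :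
    IsParkingFunction a b w ↔
      ∀ s, 1 ≤ s → s ≤ b → a * s ≤ b * (univ.filter fun j => w j < s).card := by
  constructor
  · intro h s hs1 hsb
    obtain ⟨x, hx⟩ : ∃ x, a * s = x + 1 :=
      ⟨a * s - 1, by have : 0 < a * s := Nat.mul_pos ha hs1; omega⟩
    set i := x / b + 1 with hi
    have h1 : b * (i - 1) < a * s := by
      calc b * (i - 1) = x / b * b := by simp [hi, mul_comm]
      _ ≤ x := Nat.div_mul_le_self _ _
      _ < a * s := by rw [hx]; exact Nat.lt_succ_self x
    have h2 : a * s ≤ b * i := by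
      have hxx : x < (x / b + 1) * b := (Nat.div_lt_iff_lt_mul hb).mp (Nat.lt_succ_self _)
      calc a * s = x + 1 := hx
      _ ≤ (x / b + 1) * b := hxx
      _ = b * i := by rw [hi, mul_comm]
    have hia : i ≤ a := by
      have hba : b * (i - 1) < b * a := by
        calc b * (i - 1) < a * s := h1
        _ ≤ a * b := Nat.mul_le_mul_left a hsb
        _ = b * a := mul_comm _ _
      exact Nat.succ_le_of_lt (by simpa [hi] using Nat.lt_of_mul_lt_mul_left hba)
    have hcard := h i (Nat.succ_le_succ (Nat.zero_le _)) hia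
    have hsub : (univ.filter fun j : Fin a => a * w j ≤ b * (i - 1))
        ⊆ univ.filter fun j => w j < s := by
      intro j hj
      simp only [mem_filter, mem_univ, true_and] at hj ⊢
      by_contra hws
      have hws' : s ≤ w j := not_lt.mp hws
      have : a * s ≤ a * w j := Nat.mul_le_mul_left a hws'
      omega
    calc a * s ≤ b * i := h2
      _ ≤ b * (univ.filter fun j => w j < s).card :=
        Nat.mul_le_mul_left b (le_trans hcard (Finset.card_le_card hsub))
  · intro h i hi1 hia
    set s := b * (i - 1) / a + 1 with hs
    have hsb : s ≤ b := by
      have h1 : b * (i - 1) < b * a := by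
        calc b * (i - 1) ≤ b * (a - 1) := Nat.mul_le_mul_left b (by omega)
        _ < b * a := (Nat.mul_lt_mul_left hb).mpr (by omega)
      exact Nat.succ_le_of_lt ((Nat.div_lt_iff_lt_mul ha).mpr h1)
    have key := h s (Nat.succ_le_succ (Nat.zero_le _)) hsb
    have step1 : b * (i - 1) < a * s := by
      calc b * (i - 1) < (b * (i - 1) / a + 1) * a :=
        (Nat.div_lt_iff_lt_mul ha).mp (Nat.lt_succ_self _)
      _ = a * s := by rw [hs, mul_comm]
    have hsub : (univ.filter fun j => w j < s) ⊆
        univ.filter fun j : Fin a => a * w j ≤ b * (i - 1) := by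
      intro j hj
      simp only [mem_filter, mem_univ, true_and] at hj ⊢
      have hle : w j ≤ b * (i - 1) / a := by rw [hs] at hj; exact Nat.lt_succ_iff.mp hj
      calc a * w j ≤ a * (b * (i - 1) / a) := Nat.mul_le_mul_left a hle
        _ = b * (i - 1) / a * a := mul_comm _ _
        _ ≤ b * (i - 1) := Nat.div_mul_le_self _ _
    have hcnt : i ≤ (univ.filter fun j => w j < s).card := by
      have hbc : b * (i - 1) < b * (univ.filter fun j => w j < s).card :=
        lt_of_lt_of_le step1 key
      have := Nat.lt_of_mul_lt_mul_left hbc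
      omega
    exact le_trans hcnt (Finset.card_le_card hsub)

lemma park_lt (ha : 0 < a) (hb : 0 < b) {w : Fin a → ℕ}
    (hw : IsParkingFunction a b w) : ∀ j, w j < b := by
  intro j
  have h := hw a ha le_rfl
  have hall : a * w j ≤ b * (a - 1) := by
    have hle : (univ.filter fun j : Fin a => a * w j ≤ b * (a - 1)).card ≤ a := by
      simpa using Finset.card_filter_le univ (fun j : Fin a => a * w j ≤ b * (a - 1))
    have heq : (univ.filter fun j : Fin a => a * w j ≤ b * (a - 1)) = univ := by
      apply Finset.eq_univ_of_card
      simp only [Fintype.card_fin]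
      omega
    have hj : j ∈ (univ.filter fun j : Fin a => a * w j ≤ b * (a - 1)) := by
      rw [heq]; exact mem_univ j
    exact (mem_filter.mp hj).2
  have h3 : a * w j < a * b := by
    calc a * w j ≤ b * (a - 1) := hall
    _ < b * a := (Nat.mul_lt_mul_left hb).mpr (by omega)
    _ = a * b := mul_comm _ _
  exact Nat.lt_of_mul_lt_mul_left h3

section Cycle

variable (a b : ℕ) [NeZero b]

/-- number of `j` with value `t`. -/
def gc (f : Fin a → ZMod b) (t : ℕ) : ℕ :=
  (univ.filter fun j : Fin a => (f j).val = t).card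

/-- cumulative count, extended periodically. -/
def Nc (f : Fin a → ZMod b) (s : ℕ) : ℕ := ∑ t ∈ range s, gc a b f (t % b)

/-- the integer "excess" function. -/
def Pz (f : Fin a → ZMod b) (s : ℕ) : ℤ := b * Nc a b f s - a * s

variable {a b}
variable (f : Fin a → ZMod b)

lemma Nc_b : Nc a b f b = a := by
  have h1 : Nc a b f b = ∑ t ∈ range b, gc a b f t := by
    refine Finset.sum_congr rfl fun t ht => ?_
    rw [Nat.mod_eq_of_lt (mem_range.mp ht)]
  have h2 : (univ.filter fun j : Fin a => (f j).val < b).card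
      = ∑ t ∈ range b, gc a b f t := cnt_eq_sum _ b
  have h3 : (univ.filter fun j : Fin a => (f j).val < b) = univ := by
    refine Finset.eq_univ_of_forall fun j => ?_
    simp [ZMod.val_lt]
  rw [h1, ← h2, h3, card_univ, Fintype.card_fin]

lemma Nc_add_b (s : ℕ) : Nc a b f (s + b) = Nc a b f s + a := by
  induction s with
  | zero => simpa [Nc] using Nc_b f
  | succ s ih =>
    have e1 : s + 1 + b = (s + b) + 1 := by omega
    rw [e1]
    unfold Nc
    rw [Finset.sum_range_succ, Finset.sum_range_succ]
    have : (s + b) % b = s % b := Nat.add_mod_right s b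
    rw [this]
    have ih' : (∑ t ∈ range (s + b), gc a b f (t % b)) = (∑ t ∈ range s, gc a b f (t % b)) + a := ih
    omega

lemma Nc_add (u s : ℕ) :
    Nc a b f (u + s) = Nc a b f u + ∑ t ∈ range s, gc a b f ((u + t) % b) := by
  induction s with
  | zero => simp
  | succ s ih =>
    have e1 : u + (s + 1) = (u + s) + 1 := by omega
    rw [e1]
    unfold Nc at *
    rw [Finset.sum_range_succ, Finset.sum_range_succ, ih]
    omega

lemma fiber_shift (c : ZMod b) {t : ℕ} (ht : t < b) :
    (univ.filter fun j : Fin a => (f j - c).val = t).card = gc a b f ((c.val + t) % b) := by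
  unfold gc
  congr 1
  ext j
  simp only [mem_filter, mem_univ, true_and]
  constructor
  · intro h
    have h1 : f j - c = (t : ZMod b) := by
      have := ZMod.natCast_rightInverse (n := b) (f j - c)
      rw [← this, h]
    have h2 : f j = (t : ZMod b) + c := by rw [← h1]; ring
    rw [h2, ZMod.val_add, ZMod.val_natCast, Nat.mod_add_mod, add_comm t c.val]
  · intro h
    have h2 : f j = (t : ZMod b) + c := by
      apply ZMod.val_injective
      rw [h, ZMod.val_add, ZMod.val_natCast, Nat.mod_add_mod, add_comm t c.val]
    rw [h2]
    have : (t : ZMod b) + c - c = (t : ZMod b) := by ring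
    rw [this, ZMod.val_natCast_of_lt ht]

lemma Nc_shift (c : ZMod b) {s : ℕ} (hs : s ≤ b) :
    Nc a b f (c.val + s)
      = Nc a b f c.val + (univ.filter fun j : Fin a => (f j - c).val < s).card := by
  rw [Nc_add, cnt_eq_sum]
  congr 1
  refine Finset.sum_congr rfl fun t ht => ?_
  have ht' : t < b := lt_of_lt_of_le (mem_range.mp ht) hs
  exact (fiber_shift f c ht').symm

lemma Pz_add_b (s : ℕ) : Pz a b f (s + b) = Pz a b f s := by
  unfold Pz
  rw [Nc_add_b]
  push_cast
  ring

lemma Pz_mod (s : ℕ) : Pz a b f s = Pz a b f (s % b) := by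
  have key : ∀ q r : ℕ, Pz a b f (r + b * q) = Pz a b f r := by
    intro q
    induction q with
    | zero => simp
    | succ q ih =>
      intro r
      have e1 : r + b * (q + 1) = (r + b * q) + b := by ring
      rw [e1, Pz_add_b, ih]
  conv_lhs => rw [← Nat.mod_add_div s b]
  exact key _ _

lemma Pz_inj (hab : Nat.Coprime a b) {s t : ℕ} (hs : s < b) (ht : t < b)
    (h : Pz a b f s = Pz a b f t) : s = t := by
  have hds : (b : ℤ) ∣ Pz a b f s + a * s := ⟨Nc a b f s, by unfold Pz; ring⟩
  have hdt : (b : ℤ) ∣ Pz a b f t + a * t := ⟨Nc a b f t, by unfold Pz; ring⟩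
  have hd : (b : ℤ) ∣ (a : ℤ) * ((s : ℤ) - t) := by
    have := dvd_sub hds hdt
    rw [h] at this
    have e : Pz a b f t + a * s - (Pz a b f t + a * t) = (a : ℤ) * ((s : ℤ) - t) := by ring
    rwa [e] at this
  have hcop : IsCoprime (b : ℤ) (a : ℤ) := (Nat.isCoprime_iff_coprime.mpr hab).symm
  have hd2 : (b : ℤ) ∣ (s : ℤ) - t := hcop.dvd_of_dvd_mul_left hd
  have : (s : ℤ) - t = 0 := by
    refine Int.eq_zero_of_abs_lt_dvd hd2 ?_
    rw [abs_lt]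
    constructor <;> push_cast <;> omega
  omega

lemma park_shift_iff (ha : 0 < a) (hb : 0 < b) (c : ZMod b) :
    IsParkingFunction a b (fun j => (f j - c).val) ↔
      ∀ s, 1 ≤ s → s ≤ b → Pz a b f c.val ≤ Pz a b f (c.val + s) := by
  rw [park_iff ha hb]
  refine forall_congr' fun s => ?_
  refine imp_congr_right fun hs1 => imp_congr_right fun hsb => ?_
  have expand : Pz a b f (c.val + s) = Pz a b f c.val +
      ((b : ℤ) * (univ.filter fun j : Fin a => (f j - c).val < s).card - a * s) := by
    unfold Pz
    rw [Nc_shift f c hsb]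
    push_cast
    ring
  rw [expand, le_add_iff_nonneg_right, sub_nonneg]
  constructor <;> intro h <;> exact_mod_cast h

lemma park_shift_iff_min (ha : 0 < a) (hb : 0 < b) (c : ZMod b) :
    IsParkingFunction a b (fun j => (f j - c).val) ↔
      ∀ t, t < b → Pz a b f c.val ≤ Pz a b f t := by
  rw [park_shift_iff f ha hb c]
  have hcv : c.val < b := ZMod.val_lt c
  constructor
  · intro h t ht
    rcases lt_or_ge c.val t with hlt | hle
    · have := h (t - c.val) (by omega) (by omega)
      rwa [show c.val + (t - c.val) = t by omega] at this
    · have := h (t + b - c.val) (by omega) (by omega)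
      rwa [show c.val + (t + b - c.val) = t + b by omega, Pz_add_b] at this
  · intro h s _ _
    rw [Pz_mod f (c.val + s)]
    exact h _ (Nat.mod_lt _ hb)

lemma exists_unique_shift (ha : 0 < a) (hb : 0 < b) (hab : Nat.Coprime a b) :
    ∃! c : ZMod b, IsParkingFunction a b (fun j => (f j - c).val) := by
  obtain ⟨t0, ht0mem, hmin⟩ :=
    Finset.exists_min_image (range b) (Pz a b f) ⟨0, mem_range.mpr hb⟩
  have ht0 : t0 < b := mem_range.mp ht0mem
  refine ⟨(t0 : ZMod b), ?_, ?_⟩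
  · show IsParkingFunction a b (fun j => (f j - (t0 : ZMod b)).val)
    rw [park_shift_iff_min f ha hb]
    intro t ht
    rw [ZMod.val_natCast_of_lt ht0]
    exact hmin t (mem_range.mpr ht)
  · intro c' hc'
    replace hc' : IsParkingFunction a b (fun j => (f j - c').val) := hc'
    rw [park_shift_iff_min f ha hb] at hc'
    have h1 : Pz a b f c'.val ≤ Pz a b f t0 := hc' t0 ht0
    have h2 : Pz a b f t0 ≤ Pz a b f c'.val := hmin c'.val (mem_range.mpr (ZMod.val_lt c'))
    have hv : c'.val = t0 := Pz_inj f hab (ZMod.val_lt c') ht0 (le_antisymm h1 h2)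
    apply ZMod.val_injective
    rw [hv, ZMod.val_natCast_of_lt ht0]

end Cycle

section Counting

open Equiv Equiv.Perm

variable {n : ℕ} (σ : Equiv.Perm (Fin n))

/-- the setoid whose classes are the orbits of `σ`. -/
def cycleSetoid : Setoid (Fin n) :=
  ⟨σ.SameCycle, ⟨fun x => Equiv.Perm.SameCycle.refl σ x,
    fun h => h.symm, fun h1 h2 => h1.trans h2⟩⟩

lemma pow_fix {X : Type*} {f : Fin n → X} (hf : f ∘ σ = f) :
    ∀ (m : ℕ) (x : Fin n), f ((σ ^ m) x) = f x := by
  intro m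
  induction m with
  | zero => intro x; simp
  | succ m ih =>
    intro x
    rw [pow_succ, Equiv.Perm.mul_apply, ih (σ x)]
    exact congrFun hf x

lemma const_on_sameCycle {X : Type*} {f : Fin n → X} (hf : f ∘ σ = f)
    {x y : Fin n} (h : σ.SameCycle x y) : f x = f y := by
  obtain ⟨m, -, hm⟩ := h.exists_pow_eq'
  rw [← hm, pow_fix σ hf]

/-- invariant functions correspond to functions on orbits. -/
def invFunEquiv (X : Type*) :
    {f : Fin n → X // f ∘ σ = f} ≃ (Quotient (cycleSetoid σ) → X) where
  toFun f := Quotient.lift f.1 (fun _ _ h => const_on_sameCycle σ f.2 h)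
  invFun q := ⟨fun x => q (Quotient.mk _ x), by
    funext x
    exact congrArg q (Quotient.sound
      (Equiv.Perm.sameCycle_apply_left.mpr (Equiv.Perm.SameCycle.refl σ x)))⟩
  left_inv f := Subtype.ext rfl
  right_inv q := funext fun z => Quotient.inductionOn z fun x => rfl

/-- the map classifying an orbit: either a cycle factor or a fixed point. -/
noncomputable def orbitMap : Quotient (cycleSetoid σ) →
    ({c // c ∈ σ.cycleFactorsFinset} ⊕ {x : Fin n // σ x = x}) := by
  classical
  refine Quotient.lift (fun x => if h : σ x = x then Sum.inr ⟨x, h⟩ else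
    Sum.inl ⟨σ.cycleOf x, Equiv.Perm.cycleOf_mem_cycleFactorsFinset_iff.mpr
      (Equiv.Perm.mem_support.mpr h)⟩) ?_
  intro x y h
  by_cases hx : σ x = x
  · have hxy : x = y := h.eq_of_left hx
    subst hxy; rfl
  · have hy : ¬ σ y = y := fun hy => hx (h.apply_eq_self_iff.mpr hy)
    simp only [dif_neg hx, dif_neg hy]
    exact congrArg Sum.inl (Subtype.ext h.cycleOf_eq)

lemma orbitMap_bijective : Function.Bijective (orbitMap σ) := by
  classical
  constructor
  · intro q1 q2
    refine Quotient.inductionOn₂ q1 q2 fun x y h => ?_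
    unfold orbitMap at h
    simp only [Quotient.lift_mk] at h
    by_cases hx : σ x = x <;> by_cases hy : σ y = y
    · rw [dif_pos hx, dif_pos hy] at h
      have hxy : x = y := congrArg Subtype.val (Sum.inr.inj h)
      exact Quotient.sound (hxy ▸ Equiv.Perm.SameCycle.refl σ x)
    · rw [dif_pos hx, dif_neg hy] at h; simp at h
    · rw [dif_neg hx, dif_pos hy] at h; simp at h
    · rw [dif_neg hx, dif_neg hy] at h
      have hcyc : σ.cycleOf x = σ.cycleOf y := congrArg Subtype.val (Sum.inl.inj h)
      have hy' : y ∈ (σ.cycleOf y).support :=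
        Equiv.Perm.mem_support_cycleOf_iff.mpr
          ⟨Equiv.Perm.SameCycle.refl σ y, Equiv.Perm.mem_support.mpr hy⟩
      rw [← hcyc] at hy'
      exact Quotient.sound (Equiv.Perm.mem_support_cycleOf_iff.mp hy').1
  · intro z
    rcases z with ⟨c, hc⟩ | ⟨x, hx⟩
    · obtain ⟨x, hx1, -⟩ := (Equiv.Perm.mem_cycleFactorsFinset_iff.mp hc).1
      have hxs : x ∈ c.support := Equiv.Perm.mem_support.mpr hx1
      have hσx : ¬ σ x = x :=
        Equiv.Perm.mem_support.mp (Equiv.Perm.mem_cycleFactorsFinset_support_le hc hxs)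
      refine ⟨Quotient.mk _ x, ?_⟩
      unfold orbitMap
      simp only [Quotient.lift_mk]
      rw [dif_neg hσx]
      exact congrArg Sum.inl (Subtype.ext (Equiv.Perm.cycle_is_cycleOf hxs hc).symm)
    · refine ⟨Quotient.mk _ x, ?_⟩
      unfold orbitMap
      simp only [Quotient.lift_mk]
      rw [dif_pos hx]

lemma card_quotient_eq :
    Nat.card (Quotient (cycleSetoid σ)) =
      Multiset.card σ.cycleType + (n - σ.cycleType.sum) := by
  classical
  have h1 : Nat.card (Quotient (cycleSetoid σ)) =
      Nat.card ({c // c ∈ σ.cycleFactorsFinset} ⊕ {x : Fin n // σ x = x}) :=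
    Nat.card_eq_of_bijective _ (orbitMap_bijective σ)
  rw [h1, Nat.card_sum]
  have h2 : Nat.card {c // c ∈ σ.cycleFactorsFinset} = σ.cycleFactorsFinset.card := by
    rw [Nat.card_eq_fintype_card, Fintype.card_coe]
  have h3 : Nat.card {x : Fin n // σ x = x} = (univ.filter fun x : Fin n => σ x = x).card := by
    rw [Nat.card_eq_fintype_card, Fintype.card_subtype]
  have h4 : Multiset.card σ.cycleType = σ.cycleFactorsFinset.card := by
    rw [Equiv.Perm.cycleType_def, Multiset.card_map]
    rfl
  have h5 : σ.cycleType.sum = σ.support.card := Equiv.Perm.sum_cycleType σ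
  have h6 : (univ.filter fun x : Fin n => σ x = x).card + σ.support.card = n := by
    have := Finset.card_filter_add_card_filter_not
      (s := (univ : Finset (Fin n))) (p := fun x => σ x = x)
    simp only [Finset.card_univ, Fintype.card_fin] at this
    have hsupp : σ.support = univ.filter fun x : Fin n => ¬ σ x = x := rfl
    rw [hsupp]
    exact this
  have h7 : σ.support.card ≤ n := by
    have := Finset.card_le_card (Finset.subset_univ σ.support)
    simpa using this
  rw [h2, h3, h4, h5]
  omega

end Counting

end Stmt4Aux


/-- for coprime positive `a, b` and a permutation `σ` of `{1,…,a}`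
with exactly `k` cycles (fixed points counted as 1-cycles, so `k` is the number
of nontrivial cycles plus the number of fixed points), the number of
`(a,b)`-parking functions `f` with `f ∘ σ = f` equals `b^(k−1)`. -/
theorem stmt4 (a b : ℕ) (ha : 0 < a) (hb : 0 < b) (hab : Nat.Coprime a b)
    (σ : Equiv.Perm (Fin a)) (k : ℕ)
    (hk : Multiset.card σ.cycleType + (a - σ.cycleType.sum) = k) :
    {f : Fin a → ℕ | IsParkingFunction a b f ∧ f ∘ σ = f}.ncard = b ^ (k - 1) := by
  classical
  haveI : NeZero b := ⟨hb.ne'⟩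
  open Stmt4Aux in
  -- Step 1: transfer to ZMod-valued functions
  have e1 : {f : Fin a → ℕ | IsParkingFunction a b f ∧ f ∘ σ = f} ≃
      {f : Fin a → ZMod b // IsParkingFunction a b (fun j => (f j).val) ∧ f ∘ σ = f} :=
    { toFun := fun g => ⟨fun j => ((g.1 j : ℕ) : ZMod b), by
        have hg := g.2
        simp only [Set.mem_setOf_eq] at hg
        have hlt : ∀ j, g.1 j < b := Stmt4Aux.park_lt ha hb hg.1
        have hv : (fun j => (((g.1 j : ℕ) : ZMod b)).val) = g.1 :=
          funext fun j => ZMod.val_natCast_of_lt (hlt j)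
        refine ⟨by rw [hv]; exact hg.1, ?_⟩
        funext j
        exact congrArg _ (congrFun hg.2 j)⟩,
      invFun := fun p => ⟨fun j => (p.1 j).val, by
        refine ⟨p.2.1, ?_⟩
        funext j
        exact congrArg ZMod.val (congrFun p.2.2 j)⟩,
      left_inv := fun g => Subtype.ext (funext fun j => by
        have hg := g.2
        simp only [Set.mem_setOf_eq] at hg
        exact ZMod.val_natCast_of_lt (Stmt4Aux.park_lt ha hb hg.1 j)),
      right_inv := fun p => Subtype.ext (funext fun j =>
        ZMod.natCast_rightInverse (p.1 j)) }
  have hcard1 : {f : Fin a → ℕ | IsParkingFunction a b f ∧ f ∘ σ = f}.ncard =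
      Nat.card {f : Fin a → ZMod b //
        IsParkingFunction a b (fun j => (f j).val) ∧ f ∘ σ = f} := by
    rw [← Nat.card_coe_set_eq]
    exact Nat.card_congr e1
  -- Step 2: the Pollak shifting bijection
  have hbij : Function.Bijective (fun pc :
      {f : Fin a → ZMod b // IsParkingFunction a b (fun j => (f j).val) ∧ f ∘ σ = f} × ZMod b =>
      (⟨fun j => pc.1.1 j + pc.2, by
        funext j
        exact congrArg (fun z => z + pc.2) (congrFun pc.1.2.2 j)⟩ : {f : Fin a → ZMod b // f ∘ σ = f})) := by
    constructor
    · rintro ⟨⟨p1, hp1, hi1⟩, c1⟩ ⟨⟨p2, hp2, hi2⟩, c2⟩ heq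
      have hfeq : (fun j => p1 j + c1) = (fun j => p2 j + c2) := congrArg Subtype.val heq
      obtain ⟨c0, -, huniq⟩ := Stmt4Aux.exists_unique_shift (fun j => p1 j + c1) ha hb hab
      have h1 : c1 = c0 := huniq c1 (by
        show IsParkingFunction a b fun j => ((fun j => p1 j + c1) j - c1).val
        have : (fun j => ((fun j => p1 j + c1) j - c1).val) = fun j => (p1 j).val := by
          funext j; simp
        rw [this]; exact hp1)
      have h2 : c2 = c0 := huniq c2 (by
        show IsParkingFunction a b fun j => ((fun j => p1 j + c1) j - c2).val
        have : (fun j => ((fun j => p1 j + c1) j - c2).val) = fun j => (p2 j).val := by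
          funext j
          have h' : p1 j + c1 = p2 j + c2 := congrFun hfeq j
          show (p1 j + c1 - c2).val = (p2 j).val
          rw [h']
          simp
        rw [this]; exact hp2)
      obtain rfl : c1 = c2 := h1.trans h2.symm
      have hp : p1 = p2 := by
        funext j
        exact add_right_cancel (congrFun hfeq j)
      subst hp
      rfl
    · rintro ⟨f, hfinv⟩
      obtain ⟨c, hc, -⟩ := Stmt4Aux.exists_unique_shift f ha hb hab
      refine ⟨⟨⟨fun j => f j - c, hc, ?_⟩, c⟩, ?_⟩
      · funext j
        exact congrArg (fun z => z - c) (congrFun hfinv j)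
      · apply Subtype.ext
        funext j
        show f j - c + c = f j
        ring
  have hcard2 : Nat.card {f : Fin a → ZMod b //
        IsParkingFunction a b (fun j => (f j).val) ∧ f ∘ σ = f} * b =
      Nat.card {f : Fin a → ZMod b // f ∘ σ = f} := by
    calc Nat.card {f : Fin a → ZMod b //
        IsParkingFunction a b (fun j => (f j).val) ∧ f ∘ σ = f} * b
        = Nat.card ({f : Fin a → ZMod b //
            IsParkingFunction a b (fun j => (f j).val) ∧ f ∘ σ = f} × ZMod b) := by
          rw [Nat.card_prod, Nat.card_zmod]
      _ = Nat.card {f : Fin a → ZMod b // f ∘ σ = f} := Nat.card_eq_of_bijective _ hbij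
  -- Step 3: count the invariant functions
  have hcard3 : Nat.card {f : Fin a → ZMod b // f ∘ σ = f} = b ^ k := by
    rw [Nat.card_congr (Stmt4Aux.invFunEquiv σ (ZMod b)), Nat.card_fun, Nat.card_zmod,
      Stmt4Aux.card_quotient_eq σ, hk]
  -- Step 4: conclude
  have hk1 : 1 ≤ k := by
    rw [← hk, ← Stmt4Aux.card_quotient_eq σ]
    haveI : Nonempty (Quotient (Stmt4Aux.cycleSetoid σ)) :=
      ⟨Quotient.mk _ (⟨0, ha⟩ : Fin a)⟩
    exact Nat.card_pos
  have hkk : k - 1 + 1 = k := Nat.succ_pred_eq_of_pos hk1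
  rw [hcard1]
  apply Nat.eq_of_mul_eq_mul_right hb
  rw [hcard2, hcard3]
  exact (congrArg (fun m => b ^ m) hkk.symm).trans (pow_succ b (k - 1))
end

section
/- Let a and b be coprime positive integers. Then the number of (a,b)-parking functions equals b^{a−1}. -/
/-!
A parking function takes its values in `{0, …, b - 1}`, so it is a function `f : Fin a → ZMod b`,
and the parking condition says that the walk `t ↦ b * #{j | f j < t} - a * t` is nonnegative for
`t ≤ b`. The walk has `b`-periodic steps `b * #{j | f j = x} - a` summing to `0` over a period,
and adding a constant `c` to `f` rotates these steps by `c`. By the cycle lemma exactly one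
rotation keeps the walk nonnegative, namely the one starting where the walk is minimal; the
minimum is attained once per period because the walk is `-a * t` modulo `b` and `a` is prime
to `b`. So every orbit of `ZMod b` on `Fin a → ZMod b` contains exactly one parking function,
and there are `b ^ a / b` of them.
-/

open Finset

theorem AddAction.card_mul_card_eq_of_existsUnique {G X : Type*} [AddGroup G] [AddAction G X]
    (S : Set X) (hS : ∀ x : X, ∃! g : G, -g +ᵥ x ∈ S) :
    Nat.card S * Nat.card G = Nat.card X := by
  rw [← Nat.card_prod]
  refine Nat.card_congr (Equiv.ofBijective (fun p : S × G => p.2 +ᵥ (p.1 : X)) ⟨?_, ?_⟩)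
  · rintro ⟨⟨s₁, hs₁⟩, g₁⟩ ⟨⟨s₂, hs₂⟩, g₂⟩ (h : g₁ +ᵥ s₁ = g₂ +ᵥ s₂)
    have hg : g₁ = g₂ := (hS (g₁ +ᵥ s₁)).unique (by simpa using hs₁) (by simpa [h] using hs₂)
    subst hg
    simp [(vadd_left_cancel_iff g₁).mp h]
  · intro x
    obtain ⟨g, hg, -⟩ := hS x
    exact ⟨(⟨_, hg⟩, g), by simp⟩

theorem ZMod.sum_range_eq_sum_univ {b : ℕ} [NeZero b] {M : Type*} [AddCommMonoid M]
    (D : ZMod b → M) :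
    ∑ s ∈ range b, D s = ∑ x, D x :=
  sum_nbij' (fun s => (s : ZMod b)) ZMod.val (by simp) (fun x _ => mem_range.2 (ZMod.val_lt x))
    (fun s hs => ZMod.val_cast_of_lt (mem_range.1 hs)) (fun x _ => ZMod.natCast_zmod_val x)
    (fun _ _ => rfl)

namespace RationalParking

section PrefixSum

variable {a b : ℕ} {D : ZMod b → ℤ}

def prefixSum (D : ZMod b → ℤ) (t : ℕ) : ℤ := ∑ s ∈ range t, D s

theorem prefixSum_add (D : ZMod b → ℤ) (m n : ℕ) :
    prefixSum D (m + n) = prefixSum D m + prefixSum (fun x => D ((m : ZMod b) + x)) n := by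
  simp only [prefixSum, sum_range_add, Nat.cast_add]

theorem intCast_prefixSum (hDa : ∀ x, (D x : ZMod b) = -a) (t : ℕ) :
    (prefixSum D t : ZMod b) = -(a * t) := by
  simp only [prefixSum, Int.cast_sum, hDa, sum_neg_distrib, sum_const, card_range, nsmul_eq_mul,
    neg_inj]
  ring

theorem eq_of_forall_prefixSum_le (hDa : ∀ x, (D x : ZMod b) = -a) (hab : a.Coprime b)
    {e₁ e₂ : ℕ} (he₁ : e₁ < b) (he₂ : e₂ < b) (hmin₁ : ∀ t, prefixSum D e₁ ≤ prefixSum D t)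
    (hmin₂ : ∀ t, prefixSum D e₂ ≤ prefixSum D t) : e₁ = e₂ := by
  have h : (prefixSum D e₁ : ZMod b) = prefixSum D e₂ := by
    rw [le_antisymm (hmin₁ e₂) (hmin₂ e₁)]
  rw [intCast_prefixSum hDa, intCast_prefixSum hDa, neg_inj] at h
  have hcast : (e₁ : ZMod b) = e₂ := ((ZMod.isUnit_iff_coprime a b).2 hab).mul_left_cancel h
  simpa [ZMod.val_cast_of_lt he₁, ZMod.val_cast_of_lt he₂] using congrArg ZMod.val hcast

variable [NeZero b]

theorem periodic_prefixSum (hD : ∑ x, D x = 0) : Function.Periodic (prefixSum D) b := by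
  intro t
  rw [prefixSum_add, add_eq_left, prefixSum,
    ZMod.sum_range_eq_sum_univ (fun x => D ((t : ZMod b) + x))]
  exact (Equiv.sum_comp (Equiv.addLeft _) D).trans hD

theorem exists_lt_forall_prefixSum_le (hD : ∑ x, D x = 0) :
    ∃ e < b, ∀ t, prefixSum D e ≤ prefixSum D t := by
  obtain ⟨e, he, hmin⟩ :=
    exists_min_image (range b) (prefixSum D) (nonempty_range_iff.2 (NeZero.ne b))
  refine ⟨e, mem_range.1 he, fun t => ?_⟩
  rw [← (periodic_prefixSum hD).map_mod_nat t]
  exact hmin _ (mem_range.2 (Nat.mod_lt t (NeZero.pos b)))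

theorem existsUnique_forall_prefixSum_nonneg (hD : ∑ x, D x = 0)
    (hDa : ∀ x, (D x : ZMod b) = -a) (hab : a.Coprime b) :
    ∃! c : ZMod b, ∀ t, 0 ≤ prefixSum (fun x => D (c + x)) t := by
  obtain ⟨e, he, hmin⟩ := exists_lt_forall_prefixSum_le hD
  refine ⟨e, fun t => ?_, fun c hc => ?_⟩
  · linarith [prefixSum_add D e t, hmin (e + t)]
  · rw [← ZMod.natCast_zmod_val c] at hc ⊢
    have hmin' : ∀ t, prefixSum D c.val ≤ prefixSum D t := fun t => by
      rw [← periodic_prefixSum hD t, show t + b = c.val + (t + b - c.val) by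
        have := ZMod.val_lt c; omega]
      linarith [prefixSum_add D c.val (t + b - c.val), hc (t + b - c.val)]
    rw [eq_of_forall_prefixSum_le hDa hab (ZMod.val_lt c) he hmin' hmin]

end PrefixSum

section Parking

variable {a b : ℕ}

theorem isParkingFunction_iff_forall_mul_le_card (ha : 0 < a) (hb : 0 < b) (g : Fin a → ℕ) :
    IsParkingFunction a b g ↔ ∀ t ≤ b, a * t ≤ b * #{j | g j < t} := by
  constructor
  · intro hg t ht
    by_contra! hlt
    set N := #{j | g j < t}
    have hbN : b * N < b * a := hlt.trans_le (by rw [mul_comm b]; exact Nat.mul_le_mul_left a ht)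
    have hNa : N < a := Nat.lt_of_mul_lt_mul_left hbN
    have hpark := hg (N + 1) (by omega) hNa
    rw [Nat.add_sub_cancel] at hpark
    have hsub : #{j | a * g j ≤ b * N} ≤ N := card_le_card fun j => by
      simp only [mem_filter, mem_univ, true_and]
      exact fun hj => Nat.lt_of_mul_lt_mul_left (hj.trans_lt hlt)
    omega
  · intro hg i hi hia
    -- `t` is the least value with `b * (i - 1) < a * t`
    have ht : b * (i - 1) / a + 1 ≤ b :=
      Nat.div_lt_of_lt_mul (by rw [mul_comm]; exact Nat.mul_lt_mul_of_pos_right (by omega) hb)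
    have hcount := hg _ ht
    have hset : #{j | g j < b * (i - 1) / a + 1} = #{j | a * g j ≤ b * (i - 1)} := by
      congr 1
      ext j
      simp [Nat.le_div_iff_mul_le ha, mul_comm]
    rw [hset] at hcount
    have := Nat.lt_of_mul_lt_mul_left ((Nat.lt_mul_div_succ (b * (i - 1)) ha).trans_le hcount)
    omega

theorem lt_of_isParkingFunction (ha : 0 < a) (hb : 0 < b) {g : Fin a → ℕ}
    (hg : IsParkingFunction a b g) (j : Fin a) : g j < b := by
  have h := (isParkingFunction_iff_forall_mul_le_card ha hb g).1 hg b le_rfl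
  have hcard : #{j | g j < b} = #(univ : Finset (Fin a)) :=
    le_antisymm (card_filter_le _ _)
      (by simpa using Nat.le_of_mul_le_mul_left (mul_comm a b ▸ h) hb)
  exact filter_card_eq hcard j (mem_univ j)

def excess (f : Fin a → ZMod b) (x : ZMod b) : ℤ := b * #{j | f j = x} - a

theorem intCast_excess (f : Fin a → ZMod b) (x : ZMod b) : (excess f x : ZMod b) = -a := by
  simp [excess]

theorem excess_neg_vadd (f : Fin a → ZMod b) (c : ZMod b) :
    excess (-c +ᵥ f) = fun x => excess f (c + x) := by
  ext x
  simp [excess, neg_add_eq_iff_eq_add]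

variable [NeZero b]

theorem sum_excess (f : Fin a → ZMod b) : ∑ x, excess f x = 0 := by
  have hfib : ∑ x, #{j | f j = x} = a := by
    rw [← card_eq_sum_card_fiberwise (by simp), card_univ, Fintype.card_fin]
  simp only [excess, sum_sub_distrib, ← mul_sum, ← Nat.cast_sum, hfib, sum_const, card_univ,
    ZMod.card, nsmul_eq_mul]
  push_cast
  ring

theorem prefixSum_excess (f : Fin a → ZMod b) {t : ℕ} (ht : t ≤ b) :
    prefixSum (excess f) t = b * #{j | (f j).val < t} - a * t := by
  have hfib : #{j | (f j).val < t} = ∑ s ∈ range t, #{j | f j = s} := by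
    rw [card_eq_sum_card_fiberwise (f := fun j => (f j).val) (t := range t)
      fun j hj => by simpa using hj]
    refine sum_congr rfl fun s hs => congrArg card ?_
    have hsb : s < b := (mem_range.1 hs).trans_le ht
    ext j
    simp only [mem_filter, mem_univ, true_and]
    constructor
    · rintro ⟨-, rfl⟩
      exact (ZMod.natCast_zmod_val _).symm
    · intro h
      rw [h, ZMod.val_cast_of_lt hsb]
      exact ⟨mem_range.1 hs, rfl⟩
  simp only [prefixSum, excess, sum_sub_distrib, ← mul_sum, sum_const, card_range, nsmul_eq_mul,
    hfib, Nat.cast_sum]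
  ring

theorem isParkingFunction_val_iff (ha : 0 < a) (f : Fin a → ZMod b) :
    IsParkingFunction a b (fun j => (f j).val) ↔ ∀ t, 0 ≤ prefixSum (excess f) t := by
  rw [isParkingFunction_iff_forall_mul_le_card ha (NeZero.pos b)]
  constructor
  · intro h t
    have htb : t % b ≤ b := (Nat.mod_lt t (NeZero.pos b)).le
    rw [← (periodic_prefixSum (sum_excess f)).map_mod_nat, prefixSum_excess f htb, sub_nonneg]
    exact_mod_cast h _ htb
  · intro h t ht
    have := h t
    rw [prefixSum_excess f ht, sub_nonneg] at this
    exact_mod_cast this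

theorem existsUnique_isParkingFunction_neg_vadd (ha : 0 < a) (hab : a.Coprime b)
    (f : Fin a → ZMod b) :
    ∃! c : ZMod b, -c +ᵥ f ∈ {f : Fin a → ZMod b | IsParkingFunction a b fun j => (f j).val} := by
  simpa only [Set.mem_ofPred_eq, isParkingFunction_val_iff ha, excess_neg_vadd] using
    existsUnique_forall_prefixSum_nonneg (sum_excess f) (intCast_excess f) hab

theorem card_isParkingFunction_val_mul (ha : 0 < a) (hab : a.Coprime b) :
    Nat.card {f : Fin a → ZMod b | IsParkingFunction a b fun j => (f j).val} * b = b ^ a := by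
  have := AddAction.card_mul_card_eq_of_existsUnique _
    (existsUnique_isParkingFunction_neg_vadd ha hab)
  rwa [Nat.card_zmod, Nat.card_fun, Nat.card_zmod, Nat.card_fin] at this

theorem setOf_isParkingFunction_eq_image (ha : 0 < a) :
    {g | IsParkingFunction a b g} = (fun f j => (f j).val) ''
      {f : Fin a → ZMod b | IsParkingFunction a b fun j => (f j).val} := by
  ext g
  constructor
  · intro hg
    have hval : (fun j => (g j : ZMod b).val) = g :=
      funext fun j => ZMod.val_cast_of_lt (lt_of_isParkingFunction ha (NeZero.pos b) hg j)
    exact ⟨fun j => g j, by simpa only [Set.mem_ofPred_eq, hval], hval⟩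
  · rintro ⟨f, hf, rfl⟩
    exact hf

end Parking

end RationalParking

open RationalParking in
/-- for coprime positive integers `a, b`, the number of
`(a,b)`-parking functions equals `b^(a−1)`. -/
theorem stmt5 (a b : ℕ) (ha : 0 < a) (hb : 0 < b) (hab : Nat.Coprime a b) :
    {f : Fin a → ℕ | IsParkingFunction a b f}.ncard = b ^ (a - 1) := by
  have : NeZero b := ⟨hb.ne'⟩
  have hinj : Function.Injective fun (f : Fin a → ZMod b) j => (f j).val :=
    (ZMod.val_injective b).comp_left
  rw [setOf_isParkingFunction_eq_image ha, Set.ncard_image_of_injective _ hinj,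
    ← Nat.card_coe_set_eq]
  apply Nat.eq_of_mul_eq_mul_right hb
  rw [card_isParkingFunction_val_mul ha hab, ← pow_succ, Nat.sub_add_cancel ha]
end

section
/- Let a and b be coprime positive integers. Then the number of orbits of the action of the symmetric group S_a on the set of (a,b)-parking functions equals (a+b−1)!/(a!·b!), i.e., equals (1/(a+b))·binomial(a+b, a). -/
/-!
Sorting identifies the orbits with the weakly increasing parking functions, which are the weakly
increasing `f` with `a * f k ≤ b * k`. Sending `f` to `{f k + k}` turns these into the `a`-subsets
`S` of `ℤ/(a+b)` whose lattice path (up by `b` at the steps in `S`, down by `a` at the others)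
never goes below its starting height. Cycle lemma: the height after `m` steps is `≡ -a·m` modulo
`a+b`, so the heights within one period are pairwise distinct, and the rotation of `S` that starts
at the unique lowest point is the only rotation with this property. Hence pairs (such a subset,
rotation) are in bijection with all `choose (a+b) a` subsets of size `a`.
-/

open Finset

theorem ncard_permOrbits {α : Type*} [LinearOrder α] {a : ℕ} (P : (Fin a → α) → Prop)
    (hP : ∀ f (σ : Equiv.Perm (Fin a)), P f → P (f ∘ σ)) :
    {O : Set (Fin a → α) | ∃ f, P f ∧ O = {g | ∃ σ : Equiv.Perm (Fin a), g = f ∘ σ}}.ncard =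
      {f | Monotone f ∧ P f}.ncard := by
  set orbit := fun f : Fin a → α => {g | ∃ σ : Equiv.Perm (Fin a), g = f ∘ σ}
  have orbit_comp (f : Fin a → α) (τ : Equiv.Perm (Fin a)) : orbit (f ∘ τ) = orbit f := by
    ext g
    constructor
    · rintro ⟨σ, rfl⟩
      exact ⟨τ * σ, rfl⟩
    · rintro ⟨σ, rfl⟩
      exact ⟨τ⁻¹ * σ, by ext; simp⟩
  have himage : {O | ∃ f, P f ∧ O = orbit f} = orbit '' {f | Monotone f ∧ P f} := by
    ext O
    constructor
    · rintro ⟨f, hf, rfl⟩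
      exact ⟨f ∘ Tuple.sort f, ⟨Tuple.monotone_sort f, hP _ _ hf⟩, orbit_comp _ _⟩
    · rintro ⟨f, ⟨-, hf⟩, rfl⟩
      exact ⟨f, hf, rfl⟩
  rw [himage, Set.InjOn.ncard_image]
  rintro f₁ ⟨hf₁, -⟩ f₂ ⟨hf₂, -⟩ h
  obtain ⟨σ, rfl⟩ : f₁ ∈ orbit f₂ := h ▸ ⟨1, rfl⟩
  exact Tuple.unique_monotone (τ := 1) hf₁ hf₂

theorem IsParkingFunction.comp_perm {a b : ℕ} {f : Fin a → ℕ} (hf : IsParkingFunction a b f)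
    (σ : Equiv.Perm (Fin a)) : IsParkingFunction a b (f ∘ σ) := by
  intro i hi hia
  convert hf i hi hia using 1
  simp only [card_filter, Function.comp_apply]
  exact Equiv.sum_comp σ (fun j => if a * f j ≤ b * (i - 1) then 1 else 0)

theorem isParkingFunction_iff_of_monotone {a b : ℕ} {f : Fin a → ℕ} (hf : Monotone f) :
    IsParkingFunction a b f ↔ ∀ k : Fin a, a * f k ≤ b * k := by
  have key (k : Fin a) : k < #{j | a * f j ≤ b * k} ↔ a * f k ≤ b * k :=
    Tuple.lt_card_le_iff_apply_le_of_monotone fun _ _ h => Nat.mul_le_mul_left a (hf h)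
  constructor
  · intro h k
    exact (key k).1 (by simpa using h (k + 1) (by omega) k.isLt)
  · intro h i hi hia
    have := (key ⟨i - 1, by omega⟩).2 (h _)
    simp only at this
    omega

theorem Fin.val_le_of_strictMono {a : ℕ} {s : Fin a → ℕ} (hs : StrictMono s) (k : Fin a) :
    (k : ℕ) ≤ s k := by
  simpa using card_le_card_of_injOn s (s := Iio k) (t := range (s k))
    (fun i hi => by simpa using hs (mem_Iio.1 hi)) hs.injective.injOn

theorem Fin.monotone_sub_val_of_strictMono {a : ℕ} {s : Fin a → ℕ} (hs : StrictMono s) :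
    Monotone fun k : Fin a => s k - k :=
  (monotone_iff_forall_covBy _).2 fun i j hij => by
    have := hs hij.lt
    rw [Fin.covBy_iff, Nat.covBy_iff_add_one_eq] at hij
    omega

def monotoneEquivOrderEmbedding (a n : ℕ) :
    {f : Fin a → ℕ // Monotone f ∧ ∀ k, f k + k < n} ≃ (Fin a ↪o Fin n) where
  toFun f := OrderEmbedding.ofStrictMono (fun k => ⟨f.1 k + k, f.2.2 k⟩) fun j k hjk => by
    have := f.2.1 hjk.le
    rw [Fin.lt_def] at hjk ⊢
    dsimp only
    omega
  invFun s :=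
    have hs : StrictMono fun k => (s k : ℕ) := Fin.val_strictMono.comp s.strictMono
    ⟨fun k => s k - k, Fin.monotone_sub_val_of_strictMono hs, fun k => by
      rw [Nat.sub_add_cancel (Fin.val_le_of_strictMono hs k)]
      exact (s k).isLt⟩
  left_inv f := Subtype.ext (funext fun k => Nat.add_sub_cancel _ _)
  right_inv s := by
    ext k
    exact Nat.sub_add_cancel (Fin.val_le_of_strictMono (Fin.val_strictMono.comp s.strictMono) k)

open Pointwise Fin.NatCast

namespace DyckSet

variable {n : ℕ} [NeZero n]

def prefixCount (S : Finset (Fin n)) (m : ℕ) : ℕ := #{j ∈ range m | ((j : ℕ) : Fin n) ∈ S}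

def height (S : Finset (Fin n)) (m : ℕ) : ℤ := n * prefixCount S m - #S * m

def IsDyck (S : Finset (Fin n)) : Prop := ∀ m, 0 ≤ height S m

variable {S : Finset (Fin n)}

theorem prefixCount_add (u m : ℕ) :
    prefixCount S (u + m) = prefixCount S u + prefixCount (-(u : Fin n) +ᵥ S) m := by
  simp only [prefixCount, card_filter, sum_range_add, ← neg_vadd_mem_iff, neg_neg, vadd_eq_add,
    Nat.cast_add]

theorem prefixCount_of_le {m : ℕ} (hm : m ≤ n) :
    prefixCount S m = #{x ∈ S | x.val < m} := by
  rw [prefixCount, ← card_map Fin.valEmbedding]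
  congr 1
  ext j
  simp only [mem_filter, mem_range, mem_map, Fin.valEmbedding_apply]
  constructor
  · rintro ⟨hj, hjS⟩
    refine ⟨j, ⟨hjS, ?_⟩, ?_⟩ <;> rw [Fin.val_natCast, Nat.mod_eq_of_lt (by omega)]
    exact hj
  · rintro ⟨x, ⟨hxS, hx⟩, rfl⟩
    exact ⟨hx, by rwa [Fin.cast_val_eq_self]⟩

theorem prefixCount_self : prefixCount S n = #S := by
  rw [prefixCount_of_le le_rfl, filter_true_of_mem fun x _ => x.isLt]

theorem height_add (u m : ℕ) :
    height S (u + m) = height S u + height (-(u : Fin n) +ᵥ S) m := by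
  simp only [height, prefixCount_add, card_vadd_finset]
  push_cast
  ring

theorem height_periodic : Function.Periodic (height S) n := fun m => by
  rw [height_add, add_eq_left, height, prefixCount_self, card_vadd_finset]
  ring

theorem height_injOn (hS : (#S).Coprime n) : Set.InjOn (height S) (Set.Iio n) := by
  intro i hi j hj hij
  rw [Set.mem_Iio] at hi hj
  have hdvd : (n : ℤ) ∣ #S * ((i : ℤ) - j) :=
    ⟨prefixCount S i - prefixCount S j, by simp only [height] at hij; linarith⟩
  have hcop : IsCoprime (n : ℤ) #S := Int.isCoprime_iff_gcd_eq_one.2 (by simpa using hS.symm)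
  have := Int.eq_zero_of_abs_lt_dvd (hcop.dvd_of_dvd_mul_left hdvd)
    (abs_sub_lt_iff.2 ⟨by omega, by omega⟩)
  omega

theorem isDyck_iff_forall_lt : IsDyck S ↔ ∀ m < n, 0 ≤ height S m := by
  refine ⟨fun h m _ => h m, fun h m => ?_⟩
  rw [← height_periodic.map_mod_nat]
  exact h _ (Nat.mod_lt _ (NeZero.pos n))

theorem isDyck_vadd_iff (t : Fin n) :
    IsDyck (t +ᵥ S) ↔ ∀ m, height S (-t).val ≤ height S m := by
  set u : ℕ := (-t).val
  have ht : t = -(u : Fin n) := by simp [u]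
  have hu : u < n := (-t).isLt
  have key : ∀ m, height S (u + m) = height S u + height (t +ᵥ S) m := by
    rw [ht]; exact height_add u
  constructor
  · intro h m
    have := key (m + n - u)
    rw [Nat.add_sub_cancel' (by omega), height_periodic] at this
    linarith [h (m + n - u)]
  · intro h m
    have := h (u + m)
    rw [key] at this
    linarith

theorem existsUnique_isDyck_vadd (hS : (#S).Coprime n) : ∃! t : Fin n, IsDyck (t +ᵥ S) := by
  obtain ⟨u, hu, hmin⟩ := exists_min_image (range n) (height S) ⟨0, by simp [NeZero.pos n]⟩
  rw [mem_range] at hu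
  have hglobal : ∀ m, height S u ≤ height S m := fun m => by
    rw [← height_periodic.map_mod_nat m]
    exact hmin _ (mem_range.2 (Nat.mod_lt _ (NeZero.pos n)))
  refine ⟨-(u : Fin n), (isDyck_vadd_iff _).2 ?_, fun t ht => ?_⟩
  · simpa [Nat.mod_eq_of_lt hu] using hglobal
  · have hval : (-t).val = u :=
      height_injOn hS (-t).isLt hu (le_antisymm ((isDyck_vadd_iff t).1 ht u) (hglobal _))
    rw [← neg_neg t, ← hval, Fin.cast_val_eq_self]

open Set.powersetCard in
theorem card_isDyck_mul {a : ℕ} (ha : a.Coprime n) :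
    Nat.card {S : Set.powersetCard (Fin n) a // IsDyck (S : Finset (Fin n))} * n = n.choose a := by
  have hcop (S : Set.powersetCard (Fin n) a) : (#(S : Finset (Fin n))).Coprime n := by
    rwa [card_eq]
  let shift (p : {S : Set.powersetCard (Fin n) a // IsDyck (S : Finset (Fin n))} × Fin n) :
      Set.powersetCard (Fin n) a :=
    ⟨p.2 +ᵥ (p.1 : Finset (Fin n)), by simp⟩
  have hshift : Function.Bijective shift := by
    constructor
    · rintro ⟨⟨S₁, h₁⟩, t₁⟩ ⟨⟨S₂, h₂⟩, t₂⟩ h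
      have h' : (S₁ : Finset (Fin n)) = (-t₁ + t₂) +ᵥ (S₂ : Finset (Fin n)) := by
        have h : t₁ +ᵥ (S₁ : Finset (Fin n)) = t₂ +ᵥ (S₂ : Finset (Fin n)) :=
          congrArg Subtype.val h
        rw [add_vadd, ← h, neg_vadd_vadd]
      have ht : -t₁ + t₂ = 0 :=
        (existsUnique_isDyck_vadd (hcop S₂)).unique (h' ▸ h₁) (by rwa [zero_vadd])
      obtain rfl : t₁ = t₂ := by rwa [neg_add_eq_zero] at ht
      rw [ht, zero_vadd] at h'
      obtain rfl : S₁ = S₂ := Subtype.ext h'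
      rfl
    · intro T
      obtain ⟨t, ht, -⟩ := existsUnique_isDyck_vadd (hcop T)
      exact ⟨(⟨⟨t +ᵥ (T : Finset (Fin n)), by simp⟩, ht⟩, -t), Subtype.ext (neg_vadd_vadd t _)⟩
  have := Nat.card_eq_of_bijective shift hshift
  rwa [Nat.card_prod, Nat.card_fin, Set.powersetCard.card, Nat.card_fin] at this

theorem isDyck_map_iff {a : ℕ} (s : Fin a ↪o Fin n) :
    IsDyck (univ.map s.toEmbedding) ↔ ∀ k, a * (s k : ℕ) ≤ n * k := by
  have hcount {m : ℕ} (hm : m ≤ n) :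
      prefixCount (univ.map s.toEmbedding) m = #{k | (s k : ℕ) < m} := by
    rw [prefixCount_of_le hm, filter_map, card_map]
    rfl
  have hmono : Monotone fun k => (s k : ℕ) := s.monotone
  rw [isDyck_iff_forall_lt]
  simp only [height, card_map, card_univ, Fintype.card_fin, sub_nonneg]
  constructor
  · intro h k
    have hk : #{i | (s i : ℕ) < s k} = k := by
      simp [s.lt_iff_lt, filter_gt_eq_Iio]
    have := h (s k) (s k).isLt
    rw [hcount (s k).isLt.le, hk] at this
    exact_mod_cast this
  · intro h m hm
    rw [hcount hm.le]
    set c := #{k | (s k : ℕ) < m}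
    obtain hc | hc := (card_le_univ _ : c ≤ _).lt_or_eq
    · rw [Fintype.card_fin] at hc
      have hk : m ≤ s ⟨c, hc⟩ :=
        not_lt.1 fun h' => lt_irrefl c ((Tuple.lt_card_lt_iff_apply_lt_of_monotone hmono).2 h')
      have := h ⟨c, hc⟩
      have : a * m ≤ n * c := (Nat.mul_le_mul_left a hk).trans this
      exact_mod_cast this
    · rw [show c = a from hc.trans (Fintype.card_fin a)]
      have : a * m ≤ n * a := by rw [mul_comm]; exact Nat.mul_le_mul_right a hm.le
      exact_mod_cast this

end DyckSet

open DyckSet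

theorem ncard_monotone_parkingFunction_eq_card_isDyck (a b : ℕ) [NeZero (a + b)] :
    {f : Fin a → ℕ | Monotone f ∧ IsParkingFunction a b f}.ncard =
      Nat.card {S : Set.powersetCard (Fin (a + b)) a // IsDyck (S : Finset (Fin (a + b)))} := by
  have hbound {f : Fin a → ℕ} (hf : Monotone f ∧ IsParkingFunction a b f) (k : Fin a) :
      f k + k < a + b := by
    have := (isParkingFunction_iff_of_monotone hf.1).1 hf.2 k
    by_contra!
    nlinarith [k.isLt]
  let e := (monotoneEquivOrderEmbedding a (a + b)).trans Set.powersetCard.ofFinEmbEquiv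
  rw [← Nat.card_coe_set_eq]
  refine Nat.card_congr <| (Equiv.subtypeSubtypeEquivSubtype fun hf => ⟨hf.1, hbound hf⟩).symm.trans
    (e.subtypeEquiv fun f => ?_)
  simp only [e, Equiv.trans_apply, Set.powersetCard.ofFinEmbEquiv_apply,
    Set.powersetCard.val_ofFinEmb]
  rw [isDyck_map_iff, Set.mem_ofPred_eq, and_iff_right f.2.1,
    isParkingFunction_iff_of_monotone f.2.1]
  refine forall_congr' fun k => ?_
  change a * f.1 k ≤ b * k ↔ a * (f.1 k + k) ≤ (a + b) * k
  rw [mul_add, add_mul]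
  omega

theorem stmt6_general (a b : ℕ) (ha : 0 < a) (hab : Nat.Coprime a b) :
    {O : Set (Fin a → ℕ) | ∃ f : Fin a → ℕ, IsParkingFunction a b f ∧
        O = {g | ∃ σ : Equiv.Perm (Fin a), g = f ∘ σ}}.ncard *
      (a.factorial * b.factorial) = (a + b - 1).factorial := by
  have : NeZero (a + b) := ⟨by omega⟩
  rw [ncard_permOrbits _ fun f σ hf => hf.comp_perm σ,
    ncard_monotone_parkingFunction_eq_card_isDyck]
  apply Nat.eq_of_mul_eq_mul_left (show 0 < a + b by omega)
  calc (a + b) * (Nat.card _ * (a.factorial * b.factorial))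
      = (Nat.card _ * (a + b)) * (a.factorial * b.factorial) := by ring
    _ = (a + b).choose a * a.factorial * b.factorial := by
      rw [card_isDyck_mul (Nat.coprime_self_add_right.2 hab), mul_assoc]
    _ = (a + b) * (a + b - 1).factorial := by
      rw [Nat.choose_symm_add, Nat.add_choose_mul_factorial_mul_factorial,
        Nat.mul_factorial_pred (by omega)]

/-- for coprime positive integers `a, b`, the number of orbits of
the action `σ·f = f ∘ σ⁻¹` of the symmetric group `S_a` on the set of
`(a,b)`-parking functions equals `(a+b−1)!/(a!·b!)`.  (The orbit of `f` is the
set `{f ∘ σ : σ ∈ S_a}`.) -/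
theorem stmt6 (a b : ℕ) (ha : 0 < a) (hb : 0 < b) (hab : Nat.Coprime a b) :
    {O : Set (Fin a → ℕ) | ∃ f : Fin a → ℕ, IsParkingFunction a b f ∧
        O = {g | ∃ σ : Equiv.Perm (Fin a), g = f ∘ σ}}.ncard *
      (a.factorial * b.factorial) = (a + b - 1).factorial :=
  stmt6_general a b ha hab
end

section
/- Let a and b be coprime positive integers. Then every (a,b)-Dyck path D satisfies area(D) ≤ (a−1)(b−1)/2, and there exists an (a,b)-Dyck path attaining this bound; that is, the maximum of area(D) over all (a,b)-Dyck paths D equals (a−1)(b−1)/2. -/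
/-- The area of an `(a,b)`-Dyck path: the number of unit lattice cells (recorded by
their lower-left corner `c = (x, y)`) whose interior lies below the path — i.e. the
path reaches height `y+1` after at most `x` east steps — and strictly above the line
`y = (a/b)·x` — i.e. `a·(x+1) ≤ b·y`. -/
noncomputable def dyckArea (a b : ℕ) (w : List Bool) : ℕ :=
  {c : ℕ × ℕ |
    (∃ p : List Bool, p <+: w ∧ p.count false ≤ c.1 ∧ c.2 + 1 ≤ p.count true) ∧
    a * (c.1 + 1) ≤ b * c.2}.ncard

/-!
Any path with `a` north steps only covers cells of the rectangle lying in rows `y < a`, and the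
path `N^a E^b` covers all cells above the diagonal, so the maximal area is the number of those
cells, `∑_{y < a} ⌊b y / a⌋`. Since `a` and `b` are coprime, `b y / a` is never an integer for
`0 < y < a`, so rows `y` and `a - y` together hold `⌊b y / a⌋ + ⌊b (a - y) / a⌋ = b - 1` cells.
-/

open Finset

lemma mul_div_add_mul_sub_div_of_coprime {a b y : ℕ} (hab : a.Coprime b) (hy : 0 < y)
    (hya : y < a) : b * y / a + b * (a - y) / a = b - 1 := by
  have hr : b * y % a ≠ 0 := fun h ↦ by
    have := Nat.le_of_dvd hy (hab.dvd_of_dvd_mul_left (Nat.dvd_of_mod_eq_zero h))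
    omega
  have hsum : b * y + b * (a - y) = a * b := by
    rw [← Nat.mul_add, Nat.add_sub_cancel' hya.le, mul_comm]
  -- The two remainders are nonzero and add up to a multiple of `a`, so they add up to `a`.
  have hrem : b * y % a + b * (a - y) % a = a := by
    have hdvd : a ∣ b * y % a + b * (a - y) % a := by
      rw [Nat.dvd_iff_mod_eq_zero, ← Nat.add_mod, hsum, Nat.mul_mod_right]
    obtain ⟨k, hk⟩ := hdvd
    have := Nat.mod_lt (b * y) (by omega : 0 < a)
    have := Nat.mod_lt (b * (a - y)) (by omega : 0 < a)
    obtain rfl | rfl | hk2 : k = 0 ∨ k = 1 ∨ 2 ≤ k := by omega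
    · omega
    · simpa using hk
    · nlinarith
  have hdiv := Nat.div_add_mod (b * y) a
  have hdiv' := Nat.div_add_mod (b * (a - y)) a
  have hmul : a * (b * y / a + b * (a - y) / a + 1) = a * b := by
    rw [Nat.mul_add, Nat.mul_add]; omega
  have hq := Nat.eq_of_mul_eq_mul_left (by omega) hmul
  exact Nat.eq_sub_of_add_eq hq

lemma two_mul_sum_range_mul_div_of_coprime {a b : ℕ} (hab : a.Coprime b) :
    2 * ∑ y ∈ range a, b * y / a = (a - 1) * (b - 1) := by
  rcases Nat.eq_zero_or_pos a with rfl | ha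
  · simp
  have hsum : ∑ y ∈ range a, b * y / a = ∑ y ∈ Ico 1 a, b * y / a := by
    rw [range_eq_Ico, sum_eq_sum_Ico_succ_bot ha, mul_zero, Nat.zero_div, zero_add]
  have hreflect : ∑ y ∈ Ico 1 a, b * (a - y) / a = ∑ y ∈ Ico 1 a, b * y / a := by
    rw [sum_Ico_reflect (fun y ↦ b * y / a) 1 (Nat.le_succ a), Nat.add_sub_cancel_left,
      Nat.add_sub_cancel]
  calc 2 * ∑ y ∈ range a, b * y / a
      = ∑ y ∈ Ico 1 a, (b * y / a + b * (a - y) / a) := by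
        rw [sum_add_distrib, hreflect, hsum, two_mul]
    _ = ∑ _y ∈ Ico 1 a, (b - 1) := sum_congr rfl fun y hy ↦ by
        rw [mem_Ico] at hy
        exact mul_div_add_mul_sub_div_of_coprime hab hy.1 hy.2
    _ = (a - 1) * (b - 1) := by rw [sum_const, Nat.card_Ico, smul_eq_mul]

def cellsAboveDiagonal (a b : ℕ) : Finset (ℕ × ℕ) :=
  (range b ×ˢ range a).filter fun c ↦ a * (c.1 + 1) ≤ b * c.2

lemma mem_cellsAboveDiagonal {a b : ℕ} {c : ℕ × ℕ} :
    c ∈ cellsAboveDiagonal a b ↔ a * (c.1 + 1) ≤ b * c.2 ∧ c.2 < a := by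
  simp only [cellsAboveDiagonal, mem_filter, mem_product, mem_range]
  constructor
  · rintro ⟨⟨-, hy⟩, h⟩
    exact ⟨h, hy⟩
  · rintro ⟨h, hy⟩
    refine ⟨⟨?_, hy⟩, h⟩
    by_contra! hx
    nlinarith

lemma card_cellsAboveDiagonal (a b : ℕ) :
    #(cellsAboveDiagonal a b) = ∑ y ∈ range a, b * y / a := by
  rw [cellsAboveDiagonal, card_filter, sum_product_right]
  refine sum_congr rfl fun y hy ↦ ?_
  rw [← card_filter, ← card_range (b * y / a)]
  congr 1
  ext x
  rw [mem_range] at hy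
  simp only [mem_filter, mem_range, Nat.lt_iff_add_one_le,
    Nat.le_div_iff_mul_le (Nat.zero_lt_of_lt hy)]
  constructor
  · rintro ⟨-, h⟩
    linarith
  · intro h
    refine ⟨?_, by linarith⟩
    nlinarith

lemma setOf_dyckArea_subset_cellsAboveDiagonal {a b : ℕ} {w : List Bool}
    (hw : w.count true = a) :
    {c : ℕ × ℕ | (∃ p : List Bool, p <+: w ∧ p.count false ≤ c.1 ∧ c.2 + 1 ≤ p.count true) ∧
      a * (c.1 + 1) ≤ b * c.2} ⊆ cellsAboveDiagonal a b := by
  rintro c ⟨⟨p, hp, -, hpc⟩, hc⟩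
  exact mem_cellsAboveDiagonal.2 ⟨hc, hw ▸ hpc.trans (hp.count_le true)⟩

lemma dyckArea_le_card_cellsAboveDiagonal {a b : ℕ} {w : List Bool} (hw : w.count true = a) :
    dyckArea a b w ≤ #(cellsAboveDiagonal a b) := by
  rw [dyckArea, ← Set.ncard_coe_finset]
  exact Set.ncard_le_ncard (setOf_dyckArea_subset_cellsAboveDiagonal hw) (finite_toSet _)

lemma isDyckWord_replicate_append_replicate (a b : ℕ) :
    IsDyckWord a b (List.replicate a true ++ List.replicate b false) := by
  refine ⟨by simp [List.count_replicate], by simp [List.count_replicate], fun p hp ↦ ?_⟩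
  obtain ⟨n, rfl⟩ : ∃ n, p = (List.replicate a true ++ List.replicate b false).take n :=
    ⟨_, List.prefix_iff_eq_take.1 hp⟩
  simp only [List.take_append, List.take_replicate, List.length_replicate, List.count_append,
    List.count_replicate, beq_false, Bool.not_true, Bool.false_eq_true, ↓reduceIte,
    zero_add, beq_true, add_zero]
  rcases le_total n a with h | h
  · simp [Nat.sub_eq_zero_of_le h]
  · rw [min_eq_right h, mul_comm b]
    exact Nat.mul_le_mul_left a (min_le_right _ _)

lemma dyckArea_replicate_append_replicate (a b : ℕ) :
    dyckArea a b (List.replicate a true ++ List.replicate b false) =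
      #(cellsAboveDiagonal a b) := by
  rw [dyckArea, ← Set.ncard_coe_finset]
  congr 1
  refine (setOf_dyckArea_subset_cellsAboveDiagonal (by simp [List.count_replicate])).antisymm
    fun c hc ↦ ?_
  obtain ⟨hc, hca⟩ := mem_cellsAboveDiagonal.1 hc
  exact ⟨⟨List.replicate a true, List.prefix_append _ _, by simp [List.count_replicate],
    by simpa [List.count_replicate]⟩, hc⟩

theorem stmt8_general (a b : ℕ) (hab : Nat.Coprime a b) :
    (∀ w : List Bool, IsDyckWord a b w →
      2 * dyckArea a b w ≤ (a - 1) * (b - 1)) ∧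
    (∃ w : List Bool, IsDyckWord a b w ∧
      2 * dyckArea a b w = (a - 1) * (b - 1)) := by
  have hcells : 2 * #(cellsAboveDiagonal a b) = (a - 1) * (b - 1) := by
    rw [card_cellsAboveDiagonal, two_mul_sum_range_mul_div_of_coprime hab]
  refine ⟨fun w hw ↦ ?_, _, isDyckWord_replicate_append_replicate a b, ?_⟩
  · rw [← hcells]
    exact Nat.mul_le_mul_left 2 (dyckArea_le_card_cellsAboveDiagonal hw.1)
  · rw [dyckArea_replicate_append_replicate, hcells]

/-- for coprime positive integers `a, b`, every `(a,b)`-Dyck path `D`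
satisfies `area(D) ≤ (a−1)(b−1)/2` and some `(a,b)`-Dyck path attains the bound,
i.e. the maximum of the area equals `(a−1)(b−1)/2`. -/
theorem stmt8 (a b : ℕ) (ha : 0 < a) (hb : 0 < b) (hab : Nat.Coprime a b) :
    (∀ w : List Bool, IsDyckWord a b w →
      2 * dyckArea a b w ≤ (a - 1) * (b - 1)) ∧
    (∃ w : List Bool, IsDyckWord a b w ∧
      2 * dyckArea a b w = (a - 1) * (b - 1)) :=
  stmt8_general a b hab
end

section
/- Let a and b be positive integers and let μ ∈ R(a,b) have frontier w_1 w_2…w_{a+b} with levels l_0, l_1, …, l_{a+b}. Then h⁺_{b,a}(μ) equals the number of pairs (i,j) with 1 ≤ i < j ≤ a+b, w_i = E, w_j = N, and 1 ≤ l_{i−1} − l_{j−1} ≤ a+b. -/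
/-- `μ : ℕ → ℕ` represents a partition in `R(a,b)`: the value `μ i` is the
`(i+1)`-th part; the parts are weakly decreasing, at most `b`, and zero from
index `a` on (so the Young diagram of `μ` fits in an `a × b` box). -/
def InBox (a b : ℕ) (μ : ℕ → ℕ) : Prop :=
  (∀ i j : ℕ, i ≤ j → μ j ≤ μ i) ∧ μ 0 ≤ b ∧ ∀ i, a ≤ i → μ i = 0

/-- `μ ∈ D(a,b)`: `μ ∈ R(a,b)` and `a·μ_j ≤ b·(a−j)` for all (1-indexed) `j`;
in terms of the 0-indexed parts this reads `a·μ(i) ≤ b·(a−1−i)`. -/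
def InTriangle (a b : ℕ) (μ : ℕ → ℕ) : Prop :=
  InBox a b μ ∧ ∀ i, i < a → a * μ i ≤ b * (a - 1 - i)

/-- The leg of the cell in (0-indexed) row `i`, column `j` of the Young diagram
of `μ`: the number of cells strictly below it in its column. -/
noncomputable def leg (μ : ℕ → ℕ) (i j : ℕ) : ℕ :=
  {i' : ℕ | i < i' ∧ j < μ i'}.ncard

/-- The arm of the cell in row `i`, column `j` (as an integer): the number of
cells strictly to its right in its row. -/
def armZ (μ : ℕ → ℕ) (i j : ℕ) : ℤ := (μ i : ℤ) - 1 - j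

/-- `h⁺_{b,a}(μ)`: the number of cells `c` of `μ` with
`−a < a·arm(c) − b·leg(c) ≤ b`. -/
noncomputable def hplus (a b : ℕ) (μ : ℕ → ℕ) : ℕ :=
  {c : ℕ × ℕ | c.2 < μ c.1 ∧
    -(a : ℤ) < (a : ℤ) * armZ μ c.1 c.2 - (b : ℤ) * leg μ c.1 c.2 ∧
    (a : ℤ) * armZ μ c.1 c.2 - (b : ℤ) * leg μ c.1 c.2 ≤ (b : ℤ)}.ncard

/-- The frontier of `μ ∈ R(a,b)`: the lattice word from `(0,0)` to `(b,a)`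
(`true` = N, `false` = E) tracing the boundary of the diagram of `μ` inside the
`a × b` box; its `j`-th N (from the start) is preceded by exactly `μ_{a+1−j}` E's. -/
def frontierWord (a b : ℕ) (μ : ℕ → ℕ) : List Bool :=
  ((List.range a).flatMap fun y =>
    List.replicate (μ (a - 1 - y) - μ (a - y)) false ++ [true]) ++
  List.replicate (b - μ 0) false

/-- `ml_{b,a}`: the minimum of the levels `l_0, l_1, …, l_{length w}` along `w`. -/
def minLevel (a b : ℕ) (w : List Bool) : ℤ :=
  ((Finset.range (w.length + 1)).image fun i => levelAt a b w i).min'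
    (Finset.Nonempty.image ⟨0, Finset.mem_range.mpr (Nat.zero_lt_succ _)⟩ _)

/-! The `N` step ending row `r` of `μ` sits at position `μ r + (a - 1 - r)` of the frontier and the
`E` step under column `c` at position `c + (a - μ'_c)`, where `μ'_c` is the length of column `c`;
the `E` step of column `c` comes before the `N` step of row `r` exactly when `(r, c)` is a cell of
`μ`, and then the level difference between the two is `a·arm − b·leg + a`. Hence
`(r, c) ↦ (E step of c, N step of r)` maps the cells counted by `h⁺_{b,a}(μ)` bijectively onto the
pairs counted on the right. -/

theorem List.count_take_eq_card_filter {α : Type*} [DecidableEq α] (l : List α) (x : α) (k : ℕ) :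
    (l.take k).count x = ((Finset.range k).filter fun p => l[p]? = some x).card := by
  induction k with
  | zero => simp
  | succ k ih =>
    rw [List.take_add_one, List.count_append, ih, Finset.range_add_one, Finset.filter_insert]
    rcases h : l[k]? with _ | y
    · simp
    · by_cases hy : y = x
      · subst hy
        simp [Finset.card_insert_of_notMem]
      · simp [hy]

def stepWord (s : ℕ → ℕ) (n : ℕ) : List Bool :=
  (List.range n).flatMap fun y => List.replicate (s (y + 1) - s y) false ++ [true]

theorem stepWord_succ (s : ℕ → ℕ) (n : ℕ) :
    stepWord s (n + 1) = stepWord s n ++ (List.replicate (s (n + 1) - s n) false ++ [true]) := by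
  simp [stepWord, List.range_succ]

theorem replicate_false_append_true_getElem?_eq_some_true_iff (m i : ℕ) :
    (List.replicate m false ++ [true])[i]? = some true ↔ i = m := by
  rcases lt_trichotomy i m with h | rfl | h
  · simp [List.getElem?_append, h, h.ne]
  · simp
  · simp [List.getElem?_append, h.ne', show ¬ i < m by omega, show ¬ i - m = 0 by omega]

section stepWord

variable {s : ℕ → ℕ} (hs : Monotone s)
include hs

theorem length_stepWord (n : ℕ) : (stepWord s n).length = s n - s 0 + n := by
  induction n with
  | zero => simp [stepWord]
  | succ n ih =>
    have := hs (Nat.zero_le n)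
    have : s n ≤ s (n + 1) := hs (by omega)
    simp only [stepWord_succ, List.length_append, ih, List.length_replicate, List.length_singleton]
    omega

theorem stepWord_getElem?_eq_some_true_iff (n p : ℕ) :
    (stepWord s n)[p]? = some true ↔ ∃ y < n, p = s (y + 1) - s 0 + y := by
  induction n with
  | zero => simp [stepWord]
  | succ n ih =>
    have hle : ∀ y ≤ n + 1, s 0 ≤ s y ∧ s y ≤ s (n + 1) := fun y hy => ⟨hs y.zero_le, hs hy⟩
    have h0 := hle n (by omega)
    rw [stepWord_succ, List.getElem?_append, length_stepWord hs]
    split_ifs with hp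
    · rw [ih]
      constructor
      · rintro ⟨y, hyn, hpy⟩
        exact ⟨y, by omega, hpy⟩
      · rintro ⟨y, hyn, rfl⟩
        have := hle (y + 1) (by omega)
        refine ⟨y, ?_, rfl⟩
        by_contra! hyn'
        obtain rfl : y = n := by omega
        omega
    · rw [replicate_false_append_true_getElem?_eq_some_true_iff]
      constructor
      · intro h
        exact ⟨n, by omega, by omega⟩
      · rintro ⟨y, hyn, rfl⟩
        rcases Nat.lt_succ_iff_lt_or_eq.mp hyn with hyn | rfl
        · have := hle (y + 1) (by omega)
          have : s (y + 1) ≤ s n := hs (by omega)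
          omega
        · omega

end stepWord

/-- In `frontierWord a b μ`, counted from `0`, the `N` step at the end of row `r` sits at
position `northStep a μ r`, and the `E` step under column `c` at position `eastStep a μ c`. -/
def northStep (a : ℕ) (μ : ℕ → ℕ) (r : ℕ) : ℕ := μ r + (a - 1 - r)

def colLength (a : ℕ) (μ : ℕ → ℕ) (c : ℕ) : ℕ := ((Finset.range a).filter fun r => c < μ r).card

def eastStep (a : ℕ) (μ : ℕ → ℕ) (c : ℕ) : ℕ := c + (a - colLength a μ c)

theorem colLength_le (a : ℕ) (μ : ℕ → ℕ) (c : ℕ) : colLength a μ c ≤ a :=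
  (Finset.card_filter_le _ _).trans (Finset.card_range a).le

theorem colLength_antitone (a : ℕ) (μ : ℕ → ℕ) : Antitone (colLength a μ) := fun _ _ hc =>
  Finset.card_le_card <| Finset.monotone_filter_right _ fun _ _ h => hc.trans_lt h

theorem eastStep_strictMono (a : ℕ) (μ : ℕ → ℕ) : StrictMono (eastStep a μ) := fun c d hcd => by
  have := colLength_antitone a μ hcd.le
  have := colLength_le a μ c
  unfold eastStep
  omega

theorem eastStep_lt_add {a b c : ℕ} (μ : ℕ → ℕ) (hc : c < b) : eastStep a μ c < a + b := by
  unfold eastStep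
  omega

theorem frontierWord_eq_stepWord_append (a b : ℕ) (μ : ℕ → ℕ) :
    frontierWord a b μ = stepWord (fun y => μ (a - y)) a ++ List.replicate (b - μ 0) false := by
  unfold frontierWord stepWord
  congr 1
  refine List.flatMap_congr fun y _ => ?_
  rw [Nat.sub_sub, Nat.add_comm 1 y]

namespace InBox

variable {a b : ℕ} {μ : ℕ → ℕ} (hμ : InBox a b μ)
include hμ

theorem lt_of_lt_apply {r c : ℕ} (hc : c < μ r) : r < a := by
  by_contra! hr
  simp [hμ.2.2 r hr] at hc

theorem apply_le (r : ℕ) : μ r ≤ b := (hμ.1 0 r r.zero_le).trans hμ.2.1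

theorem lt_colLength_iff {r c : ℕ} : r < colLength a μ c ↔ c < μ r := by
  constructor
  · intro h
    by_contra! hc
    have : colLength a μ c ≤ r := by
      refine (Finset.card_le_card fun x hx => ?_).trans (Finset.card_range r).le
      simp only [Finset.mem_filter, Finset.mem_range] at hx ⊢
      by_contra! hrx
      exact absurd (hμ.1 r x hrx) (by omega)
    omega
  · intro hc
    have hr := hμ.lt_of_lt_apply hc
    have : r + 1 ≤ colLength a μ c := by
      refine (Finset.card_range (r + 1)).symm.le.trans (Finset.card_le_card fun x hx => ?_)
      simp only [Finset.mem_filter, Finset.mem_range] at hx ⊢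
      exact ⟨by omega, hc.trans_le (hμ.1 x r (by omega))⟩
    omega

theorem leg_eq {r c : ℕ} : leg μ r c = colLength a μ c - r - 1 := by
  have : {i | r < i ∧ c < μ i} = Set.Ioo r (colLength a μ c) := by
    ext i
    simp [hμ.lt_colLength_iff]
  rw [leg, this, ← Finset.coe_Ioo, Set.ncard_coe_finset, Nat.card_Ioo]

theorem northStep_lt_northStep {r s : ℕ} (hrs : r < s) (hs : s < a) :
    northStep a μ s < northStep a μ r := by
  have := hμ.1 r s hrs.le
  unfold northStep
  omega

theorem northStep_injOn : Set.InjOn (northStep a μ) (Set.Iio a) := fun r hr s hs h => by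
  by_contra hne
  rcases Nat.lt_or_gt_of_ne hne with hrs | hsr
  · exact (hμ.northStep_lt_northStep hrs hs).ne h.symm
  · exact (hμ.northStep_lt_northStep hsr hr).ne h

theorem northStep_lt_add {r : ℕ} (hr : r < a) : northStep a μ r < a + b := by
  have := hμ.apply_le r
  unfold northStep
  omega

theorem eastStep_lt_northStep_iff {r c : ℕ} (hr : r < a) :
    eastStep a μ c < northStep a μ r ↔ c < μ r := by
  have := hμ.lt_colLength_iff (r := r) (c := c)
  have := colLength_le a μ c
  unfold eastStep northStep
  omega

theorem northStep_lt_eastStep_iff {r c : ℕ} (hr : r < a) :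
    northStep a μ r < eastStep a μ c ↔ colLength a μ c ≤ r := by
  have := hμ.lt_colLength_iff (r := r) (c := c)
  have := colLength_le a μ c
  unfold eastStep northStep
  omega

theorem monotone_apply_sub : Monotone fun y => μ (a - y) := fun _ _ h => hμ.1 _ _ (by omega)

theorem length_frontierWord : (frontierWord a b μ).length = a + b := by
  rw [frontierWord_eq_stepWord_append, List.length_append, length_stepWord hμ.monotone_apply_sub,
    List.length_replicate]
  have := hμ.2.2 a le_rfl
  have := hμ.2.1
  simp only [Nat.sub_self, Nat.sub_zero]
  omega

theorem frontierWord_getElem?_eq_some_true_iff (p : ℕ) :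
    (frontierWord a b μ)[p]? = some true ↔ ∃ r < a, p = northStep a μ r := by
  have hμa := hμ.2.2 a le_rfl
  rw [frontierWord_eq_stepWord_append, List.getElem?_append, length_stepWord hμ.monotone_apply_sub]
  simp only [Nat.sub_self, Nat.sub_zero, hμa]
  split_ifs with hp
  · rw [stepWord_getElem?_eq_some_true_iff hμ.monotone_apply_sub]
    simp only [Nat.sub_zero, hμa]
    constructor
    · rintro ⟨y, hy, rfl⟩
      refine ⟨a - (y + 1), by omega, ?_⟩
      unfold northStep
      omega
    · rintro ⟨r, hr, rfl⟩
      refine ⟨a - 1 - r, by omega, ?_⟩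
      rw [northStep, show a - (a - 1 - r + 1) = r by omega]
  · refine iff_of_false (by simp [List.getElem?_replicate]) ?_
    rintro ⟨r, hr, rfl⟩
    have := hμ.1 0 r r.zero_le
    exact hp (by unfold northStep; omega)

theorem eastStep_ne_northStep {r c : ℕ} (hr : r < a) : eastStep a μ c ≠ northStep a μ r := by
  have := hμ.eastStep_lt_northStep_iff (c := c) hr
  have := hμ.northStep_lt_eastStep_iff (c := c) hr
  have := hμ.lt_colLength_iff (r := r) (c := c)
  omega

theorem image_northStep_union_image_eastStep :
    (Finset.range a).image (northStep a μ) ∪ (Finset.range b).image (eastStep a μ) =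
      Finset.range (a + b) := by
  refine Finset.eq_of_subset_of_card_le (fun p hp => ?_) ?_
  · simp only [Finset.mem_union, Finset.mem_image, Finset.mem_range] at hp ⊢
    rcases hp with ⟨r, hr, rfl⟩ | ⟨c, hc, rfl⟩
    exacts [hμ.northStep_lt_add hr, eastStep_lt_add μ hc]
  · have hdisj : Disjoint ((Finset.range a).image (northStep a μ))
        ((Finset.range b).image (eastStep a μ)) := by
      simp only [Finset.disjoint_left, Finset.mem_image, Finset.mem_range]
      rintro _ ⟨r, hr, rfl⟩ ⟨c, -, hc⟩
      exact hμ.eastStep_ne_northStep hr hc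
    rw [Finset.card_union_of_disjoint hdisj,
      Finset.card_image_of_injOn (by simpa using hμ.northStep_injOn),
      Finset.card_image_of_injective _ (eastStep_strictMono a μ).injective,
      Finset.card_range, Finset.card_range, Finset.card_range]

theorem frontierWord_getElem?_eq_some_false_iff (p : ℕ) :
    (frontierWord a b μ)[p]? = some false ↔ ∃ c < b, p = eastStep a μ c := by
  constructor
  · intro h
    have hp : p ∈ Finset.range (a + b) := by
      rw [Finset.mem_range, ← hμ.length_frontierWord]
      exact (List.getElem?_eq_some_iff.mp h).1
    rw [← hμ.image_northStep_union_image_eastStep] at hp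
    simp only [Finset.mem_union, Finset.mem_image, Finset.mem_range] at hp
    rcases hp with ⟨r, hr, rfl⟩ | ⟨c, hc, rfl⟩
    · have := (hμ.frontierWord_getElem?_eq_some_true_iff _).mpr ⟨r, hr, rfl⟩
      simp [h] at this
    · exact ⟨c, hc, rfl⟩
  · rintro ⟨c, hc, rfl⟩
    have hlt : eastStep a μ c < (frontierWord a b μ).length :=
      hμ.length_frontierWord ▸ eastStep_lt_add μ hc
    rw [List.getElem?_eq_getElem hlt, Option.some_inj, Bool.eq_false_iff]
    intro htrue
    obtain ⟨r, hr, hcr⟩ := (hμ.frontierWord_getElem?_eq_some_true_iff _).mp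
      (by rw [List.getElem?_eq_getElem hlt, htrue])
    exact hμ.eastStep_ne_northStep hr hcr

theorem count_true_take_frontierWord (k : ℕ) :
    ((frontierWord a b μ).take k).count true =
      ((Finset.range a).filter fun r => northStep a μ r < k).card := by
  have : ((Finset.range k).filter fun p => (frontierWord a b μ)[p]? = some true) =
      ((Finset.range a).filter fun r => northStep a μ r < k).image (northStep a μ) := by
    ext p
    simp only [Finset.mem_filter, Finset.mem_range, Finset.mem_image,
      hμ.frontierWord_getElem?_eq_some_true_iff]
    constructor
    · rintro ⟨hp, r, hr, rfl⟩
      exact ⟨r, ⟨hr, hp⟩, rfl⟩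
    · rintro ⟨r, ⟨hr, hp⟩, rfl⟩
      exact ⟨hp, r, hr, rfl⟩
  rw [List.count_take_eq_card_filter, this, Finset.card_image_of_injOn]
  exact hμ.northStep_injOn.mono fun r hr => by simp_all

theorem levelAt_frontierWord {k : ℕ} (hk : k ≤ a + b) :
    levelAt a b (frontierWord a b μ) k =
      (a + b) * (((Finset.range a).filter fun r => northStep a μ r < k).card : ℤ) - a * k := by
  have hlen := List.count_true_add_count_false ((frontierWord a b μ).take k)
  rw [List.length_take, hμ.length_frontierWord, min_eq_left hk,
    hμ.count_true_take_frontierWord] at hlen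
  have hfalse : (((frontierWord a b μ).take k).count false : ℤ) =
      k - ((Finset.range a).filter fun r => northStep a μ r < k).card := by omega
  rw [levelAt, hμ.count_true_take_frontierWord, hfalse]
  ring

theorem card_northStep_lt_northStep {r : ℕ} (hr : r < a) :
    ((Finset.range a).filter fun r' => northStep a μ r' < northStep a μ r).card = a - 1 - r := by
  have : ((Finset.range a).filter fun r' => northStep a μ r' < northStep a μ r) =
      Finset.Ioo r a := by
    ext r'
    simp only [Finset.mem_filter, Finset.mem_range, Finset.mem_Ioo]
    constructor
    · rintro ⟨hr', hlt⟩
      refine ⟨?_, hr'⟩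
      by_contra! hle
      rcases hle.lt_or_eq with hlt' | rfl
      · exact (hμ.northStep_lt_northStep hlt' hr).not_gt hlt
      · exact hlt.false
    · rintro ⟨hrr', hr'⟩
      exact ⟨hr', hμ.northStep_lt_northStep hrr' hr'⟩
  rw [this, Nat.card_Ioo]
  omega

theorem card_northStep_lt_eastStep (c : ℕ) :
    ((Finset.range a).filter fun r => northStep a μ r < eastStep a μ c).card =
      a - colLength a μ c := by
  have : ((Finset.range a).filter fun r => northStep a μ r < eastStep a μ c) =
      Finset.Ico (colLength a μ c) a := by
    ext r
    simp only [Finset.mem_filter, Finset.mem_range, Finset.mem_Ico]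
    constructor
    · rintro ⟨hr, hlt⟩
      exact ⟨(hμ.northStep_lt_eastStep_iff hr).mp hlt, hr⟩
    · rintro ⟨hle, hr⟩
      exact ⟨hr, (hμ.northStep_lt_eastStep_iff hr).mpr hle⟩
  rw [this, Nat.card_Ico]

theorem levelAt_eastStep_sub_levelAt_northStep {r c : ℕ} (hc : c < μ r) :
    levelAt a b (frontierWord a b μ) (eastStep a μ c) -
        levelAt a b (frontierWord a b μ) (northStep a μ r) =
      a * armZ μ r c - b * leg μ r c + a := by
  have hr := hμ.lt_of_lt_apply hc
  have hq := hμ.lt_colLength_iff.mpr hc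
  have hqa := colLength_le a μ c
  have hμr := hμ.apply_le r
  rw [hμ.levelAt_frontierWord (eastStep_lt_add μ (hc.trans_le hμr)).le,
    hμ.levelAt_frontierWord (hμ.northStep_lt_add hr).le, hμ.card_northStep_lt_eastStep,
    hμ.card_northStep_lt_northStep hr, hμ.leg_eq, armZ, eastStep, northStep]
  have e1 : ((a - colLength a μ c : ℕ) : ℤ) = a - colLength a μ c := by omega
  have e2 : ((a - 1 - r : ℕ) : ℤ) = a - 1 - r := by omega
  have e3 : ((colLength a μ c - r - 1 : ℕ) : ℤ) = colLength a μ c - r - 1 := by omega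
  push_cast [e1, e2, e3]
  ring

theorem injOn_eastStep_northStep :
    Set.InjOn (fun x : ℕ × ℕ => (eastStep a μ x.2 + 1, northStep a μ x.1 + 1))
      {x | x.2 < μ x.1} := by
  rintro ⟨r, c⟩ hrc ⟨r', c'⟩ hrc' h
  simp only [Prod.mk.injEq, Nat.add_right_cancel_iff] at h
  exact Prod.ext (hμ.northStep_injOn (hμ.lt_of_lt_apply hrc) (hμ.lt_of_lt_apply hrc') h.2)
    ((eastStep_strictMono a μ).injective h.1)

end InBox

theorem stmt9_general (a b : ℕ)
    (μ : ℕ → ℕ) (hμ : InBox a b μ) :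
    hplus a b μ =
      {p : ℕ × ℕ | 1 ≤ p.1 ∧ p.1 < p.2 ∧ p.2 ≤ a + b ∧
        (frontierWord a b μ)[p.1 - 1]? = some false ∧
        (frontierWord a b μ)[p.2 - 1]? = some true ∧
        1 ≤ levelAt a b (frontierWord a b μ) (p.1 - 1) -
              levelAt a b (frontierWord a b μ) (p.2 - 1) ∧
        levelAt a b (frontierWord a b μ) (p.1 - 1) -
              levelAt a b (frontierWord a b μ) (p.2 - 1) ≤ (a : ℤ) + b}.ncard := by
  rw [hplus, ← (hμ.injOn_eastStep_northStep.mono fun _ h => h.1).ncard_image]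
  congr 1
  ext ⟨i, j⟩
  simp only [Set.mem_image, Set.mem_ofPred_eq, Prod.exists, Prod.mk.injEq]
  constructor
  · rintro ⟨r, c, ⟨hc, h₁, h₂⟩, rfl, rfl⟩
    have hr := hμ.lt_of_lt_apply hc
    have hdiff := hμ.levelAt_eastStep_sub_levelAt_northStep hc
    simp only [Nat.add_sub_cancel]
    refine ⟨by omega, by simpa using (hμ.eastStep_lt_northStep_iff hr).mpr hc,
      hμ.northStep_lt_add hr, (hμ.frontierWord_getElem?_eq_some_false_iff _).mpr
        ⟨c, hc.trans_le (hμ.apply_le r), rfl⟩,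
      (hμ.frontierWord_getElem?_eq_some_true_iff _).mpr ⟨r, hr, rfl⟩, by omega, by omega⟩
  · rintro ⟨hi, hij, -, hE, hN, h₁, h₂⟩
    obtain ⟨c, -, hic⟩ := (hμ.frontierWord_getElem?_eq_some_false_iff _).mp hE
    obtain ⟨r, hr, hjr⟩ := (hμ.frontierWord_getElem?_eq_some_true_iff _).mp hN
    have hc : c < μ r := (hμ.eastStep_lt_northStep_iff hr).mp (by omega)
    have hdiff := hμ.levelAt_eastStep_sub_levelAt_northStep hc
    rw [hic, hjr] at h₁ h₂
    exact ⟨r, c, ⟨hc, by omega, by omega⟩, by omega, by omega⟩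

/-- for `μ ∈ R(a,b)` with frontier `w_1 ⋯ w_{a+b}` and levels
`l_0, …, l_{a+b}`, the statistic `h⁺_{b,a}(μ)` equals the number of pairs
`(i, j)` with `1 ≤ i < j ≤ a+b`, `w_i = E`, `w_j = N` and
`1 ≤ l_{i−1} − l_{j−1} ≤ a+b`. -/
theorem stmt9 (a b : ℕ) (ha : 0 < a) (hb : 0 < b)
    (μ : ℕ → ℕ) (hμ : InBox a b μ) :
    hplus a b μ =
      {p : ℕ × ℕ | 1 ≤ p.1 ∧ p.1 < p.2 ∧ p.2 ≤ a + b ∧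
        (frontierWord a b μ)[p.1 - 1]? = some false ∧
        (frontierWord a b μ)[p.2 - 1]? = some true ∧
        1 ≤ levelAt a b (frontierWord a b μ) (p.1 - 1) -
              levelAt a b (frontierWord a b μ) (p.2 - 1) ∧
        levelAt a b (frontierWord a b μ) (p.1 - 1) -
              levelAt a b (frontierWord a b μ) (p.2 - 1) ≤ (a : ℤ) + b}.ncard :=
  stmt9_general a b μ hμ
end
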